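/- arXiv:1203.4017 — 7 statements merged into one kernel-verified Lean document; each statement's English description precedes it below -/
import Mathlib

section
/- For every bounded continuous initial function φ : (−∞,0] → ℝ and every t ≥ 0, the solution satisfies |x_φ(t)| ≤ ‖φ‖ (1 + ρ|b|/μ) e^{(|a|+|b|) t}. -/
open MeasureTheory Real Set

/-- The sup norm of the initial function over `(-∞, 0]`. -/
noncomputable def phiNorm (φ : ℝ → ℝ) : ℝ := ⨆ θ : Set.Iic (0 : ℝ), |φ (θ : ℝ)|

/-- `x` is the solution of the delay equation
`x'(t) = a x(t) + b ∫₀^∞ K(s) x(t-s) ds` with initial function `φ` on `(-∞, 0]`. -/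
def IsSolution (a b : ℝ) (K : ℝ → ℝ) (φ : ℝ → ℝ) (x : ℝ → ℝ) : Prop :=
  (∀ t ≤ (0 : ℝ), x t = φ t) ∧ ContinuousOn x (Set.Ici 0) ∧
  ∀ t ≥ (0 : ℝ), x t = φ 0 + ∫ u in (0 : ℝ)..t,
    (a * x u + b * ∫ s in Set.Ioi (0 : ℝ), K s * x (u - s))

/-!
Write `M = ‖φ‖`, `c = |a| + |b|` and fix `D > M (1 + ρ|b|/μ)`. A first-crossing argument shows
`|x t| ≤ D e^{ct}` for all `t ≥ 0`: if the bound holds on `[0, t)`, then in the delay term the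
recent past `x(u - s)`, `s ≤ u`, is at most `D e^{cu}` while the initial segment is at most
`M ≤ M e^{μ(s - u)}`, so by `∫ K = 1` and the definition of `ρ` the delay term is at most
`D e^{cu} + M ρ e^{-μu}`. Integrating the equation then gives
`|x t| ≤ M + D (e^{ct} - 1) + |b| M ρ / μ < D e^{ct}`. Finally let `D` decrease to `M (1 + ρ|b|/μ)`.
-/

open Filter Topology

theorem abs_le_phiNorm {φ : ℝ → ℝ} (hφ : ∃ C, ∀ θ ≤ (0 : ℝ), |φ θ| ≤ C) {θ : ℝ} (hθ : θ ≤ 0) :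
    |φ θ| ≤ phiNorm φ := by
  obtain ⟨C, hC⟩ := hφ
  exact le_ciSup (f := fun θ : Iic (0 : ℝ) => |φ θ|) ⟨C, by rintro _ ⟨θ, rfl⟩; exact hC θ θ.2⟩
    ⟨θ, hθ⟩

theorem forall_le_of_forall_Ico_le_imp_lt {f g : ℝ → ℝ} {a : ℝ} (hf : ContinuousOn f (Ici a))
    (hg : ContinuousOn g (Ici a)) (h : ∀ t ≥ a, (∀ u ∈ Ico a t, f u ≤ g u) → f t < g t) :
    ∀ t ≥ a, f t ≤ g t := by
  by_contra! hbad
  set S := {t | a ≤ t ∧ g t < f t}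
  have hS : S.Nonempty := hbad
  have hSbdd : BddBelow S := ⟨a, fun _ ht => ht.1⟩
  have hclosed : IsClosed {t ∈ Ici a | g t ≤ f t} := isClosed_Ici.isClosed_le hg hf
  have hsub : S ⊆ {t ∈ Ici a | g t ≤ f t} := fun t ht => ⟨ht.1, ht.2.le⟩
  obtain ⟨ht₀a, ht₀⟩ := closure_minimal hsub hclosed (csInf_mem_closure hS hSbdd)
  refine (h _ ht₀a fun u hu => ?_).not_ge ht₀
  exact not_lt.1 fun hlt => hu.2.not_ge (csInf_le hSbdd ⟨hu.1, hlt⟩)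

theorem abs_intervalIntegral_le_sub_of_abs_le_deriv {f F F' : ℝ → ℝ} {a b : ℝ} (hab : a ≤ b)
    (hF : ∀ u, HasDerivAt F (F' u) u) (hF' : Continuous F') (hf : ∀ u ∈ Ioo a b, |f u| ≤ F' u) :
    |∫ u in a..b, f u| ≤ F b - F a := by
  have hF'int : IntervalIntegrable F' volume a b := hF'.intervalIntegrable a b
  rw [← intervalIntegral.integral_eq_sub_of_hasDerivAt (fun u _ => hF u) hF'int, ← norm_eq_abs]
  refine intervalIntegral.norm_integral_le_of_norm_le hab ?_ hF'int
  filter_upwards [Measure.ae_ne (volume : Measure ℝ) b] with u hub hu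
  exact hf u ⟨hu.1, lt_of_le_of_ne hu.2 hub⟩

theorem abs_integral_Ioi_mul_comp_sub_le {K y : ℝ → ℝ} {u A M μ : ℝ} (hμ : 0 ≤ μ) (hA : 0 ≤ A)
    (hM : 0 ≤ M) (hK : ∀ s > 0, 0 ≤ K s) (hKint : IntegrableOn K (Ioi 0))
    (hKexp : IntegrableOn (fun s => exp (μ * s) * K s) (Ioi 0))
    (hrecent : ∀ v ∈ Ico 0 u, |y v| ≤ A) (hpast : ∀ v ≤ 0, |y v| ≤ M) :
    |∫ s in Ioi 0, K s * y (u - s)| ≤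
      A * (∫ s in Ioi 0, K s) + M * exp (-μ * u) * ∫ s in Ioi 0, exp (μ * s) * K s := by
  -- a single majorant for both regimes, since `M ≤ M e^{μ (s - u)}` once the delay `s` exceeds `u`
  have hy : ∀ s > 0, |y (u - s)| ≤ A + M * exp (-μ * u) * exp (μ * s) := by
    intro s hs
    have hexp : M * exp (-μ * u) * exp (μ * s) = M * exp (μ * (s - u)) := by
      rw [mul_assoc, ← exp_add]; ring_nf
    rw [hexp]
    rcases le_or_gt 0 (u - s) with hus | hus
    · linarith [hrecent _ ⟨hus, by linarith⟩, mul_nonneg hM (exp_pos (μ * (s - u))).le]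
    · have : 1 ≤ exp (μ * (s - u)) := one_le_exp (mul_nonneg hμ (by linarith))
      linarith [hpast _ hus.le, le_mul_of_one_le_right hM this]
  have hmaj := (hKint.const_mul A).add (hKexp.const_mul (M * exp (-μ * u)))
  calc |∫ s in Ioi 0, K s * y (u - s)|
      ≤ ∫ s in Ioi 0, (A * K s + M * exp (-μ * u) * (exp (μ * s) * K s)) := by
        rw [← norm_eq_abs]
        refine norm_integral_le_of_norm_le hmaj ?_
        filter_upwards [ae_restrict_mem measurableSet_Ioi] with s hs
        rw [norm_mul, norm_of_nonneg (hK s hs), norm_eq_abs]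
        linarith [mul_le_mul_of_nonneg_left (hy s hs) (hK s hs)]
    _ = _ := by
        rw [integral_add (hKint.const_mul A) (hKexp.const_mul _), integral_const_mul,
          integral_const_mul]

theorem IsSolution.abs_lt_of_forall_Ico_le {a b μ ρ M D t : ℝ} {K φ x : ℝ → ℝ}
    (hx : IsSolution a b K φ x) (hKpos : ∀ s > 0, 0 ≤ K s) (hKint : IntegrableOn K (Ioi 0))
    (hKone : ∫ s in Ioi (0 : ℝ), K s = 1) (hμ : 0 < μ)
    (hρint : IntegrableOn (fun s => exp (μ * s) * K s) (Ioi 0))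
    (hρ : ρ = ∫ s in Ioi (0 : ℝ), exp (μ * s) * K s) (hM : ∀ θ ≤ (0 : ℝ), |φ θ| ≤ M)
    (hD : M * (1 + ρ * |b| / μ) < D) (ht : 0 ≤ t)
    (hbound : ∀ u ∈ Ico 0 t, |x u| ≤ D * exp ((|a| + |b|) * u)) :
    |x t| < D * exp ((|a| + |b|) * t) := by
  obtain ⟨hx0, -, hxeq⟩ := hx
  set c := |a| + |b|
  have hc0 : 0 ≤ c := by positivity
  have hM0 : 0 ≤ M := (abs_nonneg _).trans (hM 0 le_rfl)
  have hρ0 : 0 ≤ ρ := hρ ▸ setIntegral_nonneg measurableSet_Ioi fun s hs =>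
    mul_nonneg (exp_pos _).le (hKpos s hs)
  have hD0 : 0 ≤ D := by nlinarith [mul_nonneg hM0 (by positivity : 0 ≤ 1 + ρ * |b| / μ)]
  have hdelay : ∀ u ∈ Ioo 0 t,
      |∫ s in Ioi 0, K s * x (u - s)| ≤ D * exp (c * u) + M * exp (-μ * u) * ρ := by
    intro u hu
    have h := abs_integral_Ioi_mul_comp_sub_le (A := D * exp (c * u)) hμ.le (by positivity) hM0
      hKpos hKint hρint (fun v hv => (hbound v ⟨hv.1, hv.2.trans hu.2⟩).trans
        (mul_le_mul_of_nonneg_left (exp_le_exp.2 (mul_le_mul_of_nonneg_left hv.2.le hc0)) hD0))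
      (fun v hv => hx0 v hv ▸ hM v hv)
    rwa [hKone, mul_one, ← hρ] at h
  set F : ℝ → ℝ := fun u => D * exp (c * u) - |b| * M * ρ / μ * exp (-μ * u)
  have hF : ∀ u, HasDerivAt F (c * D * exp (c * u) + |b| * M * ρ * exp (-μ * u)) u := by
    intro u
    refine ((((hasDerivAt_id u).const_mul c).exp.const_mul D).sub
      (((hasDerivAt_id u).const_mul (-μ)).exp.const_mul (|b| * M * ρ / μ))).congr_deriv ?_
    simp only [id]
    field_simp
    ring
  have hint : |∫ u in (0 : ℝ)..t, (a * x u + b * ∫ s in Ioi 0, K s * x (u - s))| ≤ F t - F 0 := by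
    refine abs_intervalIntegral_le_sub_of_abs_le_deriv ht hF (by fun_prop) fun u hu => ?_
    calc |a * x u + b * ∫ s in Ioi 0, K s * x (u - s)|
        ≤ |a| * |x u| + |b| * |∫ s in Ioi 0, K s * x (u - s)| := by
          rw [← abs_mul, ← abs_mul]; exact abs_add_le _ _
      _ ≤ |a| * (D * exp (c * u)) + |b| * (D * exp (c * u) + M * exp (-μ * u) * ρ) := by
          gcongr
          exacts [hbound u ⟨hu.1.le, hu.2⟩, hdelay u hu]
      _ = c * D * exp (c * u) + |b| * M * ρ * exp (-μ * u) := by ring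
  have hk : 0 ≤ |b| * M * ρ / μ * exp (-μ * t) := by positivity
  have hMk : M * (1 + ρ * |b| / μ) = M + |b| * M * ρ / μ := by ring
  rw [hxeq t ht]
  calc |φ 0 + ∫ u in (0 : ℝ)..t, (a * x u + b * ∫ s in Ioi 0, K s * x (u - s))|
      ≤ M + (F t - F 0) := (abs_add_le _ _).trans (add_le_add (hM 0 le_rfl) hint)
    _ < D * exp (c * t) := by simp only [F, mul_zero, exp_zero]; linarith

theorem stmt0_general (a b μ : ℝ) (K : ℝ → ℝ)
    (hKpos : ∀ s ≥ (0 : ℝ), 0 ≤ K s)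
    (hKint : IntegrableOn K (Set.Ioi 0))
    (hKone : (∫ s in Set.Ioi (0 : ℝ), K s) = 1)
    (hμ : 0 < μ)
    (hρint : IntegrableOn (fun s => Real.exp (μ * s) * K s) (Set.Ioi 0))
    (ρ : ℝ) (hρ : ρ = ∫ s in Set.Ioi (0 : ℝ), Real.exp (μ * s) * K s)
    (φ x : ℝ → ℝ)
    (hφb : ∃ C, ∀ θ ≤ (0 : ℝ), |φ θ| ≤ C)
    (hx : IsSolution a b K φ x) :
    ∀ t ≥ (0 : ℝ),
      |x t| ≤ phiNorm φ * (1 + ρ * |b| / μ) * Real.exp ((|a| + |b|) * t) := by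
  intro t ht
  have hbound : ∀ D > phiNorm φ * (1 + ρ * |b| / μ), |x t| ≤ D * exp ((|a| + |b|) * t) :=
    fun D hD => forall_le_of_forall_Ico_le_imp_lt hx.2.1.abs (by fun_prop)
      (fun t ht => hx.abs_lt_of_forall_Ico_le (fun s hs => hKpos s hs.le) hKint hKone hμ hρint hρ
        (fun θ hθ => abs_le_phiNorm hφb hθ) hD ht) t ht
  have hlim : Tendsto (fun D => D * exp ((|a| + |b|) * t))
      (𝓝[>] (phiNorm φ * (1 + ρ * |b| / μ)))
      (𝓝 (phiNorm φ * (1 + ρ * |b| / μ) * exp ((|a| + |b|) * t))) :=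
    ((continuous_id.mul continuous_const).tendsto _).mono_left nhdsWithin_le_nhds
  exact ge_of_tendsto hlim (eventually_nhdsWithin_of_forall hbound)

theorem stmt0 (a b μ : ℝ) (K : ℝ → ℝ)
    (hKmeas : Measurable K) (hKpos : ∀ s ≥ (0 : ℝ), 0 ≤ K s)
    (hKint : IntegrableOn K (Set.Ioi 0))
    (hKone : (∫ s in Set.Ioi (0 : ℝ), K s) = 1)
    (hμ : 0 < μ)
    (hρint : IntegrableOn (fun s => Real.exp (μ * s) * K s) (Set.Ioi 0))
    (ρ : ℝ) (hρ : ρ = ∫ s in Set.Ioi (0 : ℝ), Real.exp (μ * s) * K s)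
    (φ x : ℝ → ℝ)
    (hφc : ContinuousOn φ (Set.Iic 0))
    (hφb : ∃ C, ∀ θ ≤ (0 : ℝ), |φ θ| ≤ C)
    (hx : IsSolution a b K φ x) :
    ∀ t ≥ (0 : ℝ),
      |x t| ≤ phiNorm φ * (1 + ρ * |b| / μ) * Real.exp ((|a| + |b|) * t) :=
  stmt0_general a b μ K hKpos hKint hKone hμ hρint ρ hρ φ x hφb hx
end

section
/- For every bounded continuous initial function φ : (−∞,0] → ℝ and every t ≥ 0, the variation-of-constants formula holds: x_φ(t) = X(t)·φ(0) + b ∫₀ᵗ X(t−s) ( ∫_s^∞ K(θ) φ(s−θ) dθ ) ds. -/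
open MeasureTheory Real Set

/-- `X` is the fundamental solution of the delay equation. -/
def IsFundamental (a b : ℝ) (K : ℝ → ℝ) (X : ℝ → ℝ) : Prop :=
  (∀ t < (0 : ℝ), X t = 0) ∧ X 0 = 1 ∧ ContinuousOn X (Set.Ici 0) ∧
  ∀ t ≥ (0 : ℝ), X t = 1 + ∫ u in (0 : ℝ)..t,
    (a * X u + b * ∫ s in Set.Ioi (0 : ℝ), K s * X (u - s))

/-!
Since `x = φ` on `(-∞, 0]`, on `[0, ∞)` the delay equation becomes the Volterra equation
`x = x 0 + b ∫₀ᵗ f + V x`, where `f s = ∫_s^∞ K θ φ (s - θ) dθ` carries the initial history and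
`V z t = ∫₀ᵗ (a z + b K ⋆ z)`, with `⋆` the convolution on `[0, t]`. The fundamental solution
satisfies `X = 1 + V X`. Associativity and commutativity of `⋆` show that `X * x 0 + b f ⋆ X`
solves the same equation as `x`, so their difference `z` satisfies `z = V z`; iterating the bound
`|V z t| ≤ c ∫₀ᵗ sup |z|` gives `|z t| ≤ B (c t)ⁿ / n!`, hence `z = 0`.
-/

theorem measurable_setIntegral_slice {α β : Type*} [MeasurableSpace α] [MeasurableSpace β]
    {ν : Measure β} [SFinite ν] {S : Set (α × β)} (hS : MeasurableSet S) {F : α → β → ℝ}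
    (hF : Measurable (Function.uncurry F)) :
    Measurable fun t => ∫ s in Prod.mk t ⁻¹' S, F t s ∂ν := by
  have h : ∀ t, ∫ s in Prod.mk t ⁻¹' S, F t s ∂ν =
      ∫ s, S.indicator (Function.uncurry F) (t, s) ∂ν := by
    intro t
    rw [← integral_indicator (measurable_prodMk_left hS)]
    congr 1 with s
  simp only [h]
  have hm : StronglyMeasurable
      (Function.uncurry fun t s => S.indicator (Function.uncurry F) (t, s)) :=
    (hF.indicator hS).stronglyMeasurable
  exact hm.integral_prod_right.measurable

theorem abs_setIntegral_mul_le {K y : ℝ → ℝ} {S : Set ℝ} {M : ℝ} (hS : MeasurableSet S)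
    (hK : IntegrableOn K S) (hy : ∀ r ∈ S, |y r| ≤ M) :
    |∫ r in S, K r * y r| ≤ (∫ r in S, |K r|) * M := by
  rw [← integral_mul_const, ← Real.norm_eq_abs]
  refine norm_integral_le_of_norm_le (hK.norm.mul_const M) (ae_restrict_of_forall_mem hS ?_)
  intro r hr
  rw [norm_mul, Real.norm_eq_abs, Real.norm_eq_abs]
  exact mul_le_mul_of_nonneg_left (hy r hr) (abs_nonneg _)

theorem integrableOn_mul_comp_sub {K y : ℝ → ℝ} {S : Set ℝ} {u M : ℝ} (hK : IntegrableOn K S)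
    (hS : MeasurableSet S) (hy : Measurable y) (hyb : ∀ s ∈ S, |y (u - s)| ≤ M) :
    IntegrableOn (fun s => K s * y (u - s)) S :=
  hK.mul_bdd (c := M) (hy.comp (measurable_const.sub measurable_id)).aestronglyMeasurable
    (ae_restrict_of_forall_mem hS hyb)

theorem intervalIntegral_triangle_swap {t : ℝ} (ht : 0 ≤ t) {Φ : ℝ → ℝ → ℝ}
    (hΦ : IntegrableOn (Function.uncurry Φ) {p : ℝ × ℝ | 0 < p.1 ∧ p.1 < p.2 ∧ p.2 ≤ t}) :
    ∫ s in (0)..t, ∫ v in s..t, Φ s v = ∫ v in (0)..t, ∫ s in (0)..v, Φ s v := by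
  set Ψ : ℝ → ℝ → ℝ := fun s v => if s < v then Φ s v else 0 with hΨ
  have hint : Integrable (Function.uncurry Ψ)
      ((volume.restrict (Ioc 0 t)).prod (volume.restrict (Ioc 0 t))) := by
    have hlt : MeasurableSet {p : ℝ × ℝ | p.1 < p.2} :=
      measurableSet_lt measurable_fst measurable_snd
    have heq : Function.uncurry Ψ = {p : ℝ × ℝ | p.1 < p.2}.indicator (Function.uncurry Φ) := by
      ext ⟨s, v⟩; simp [hΨ, indicator_apply]
    rw [heq, Measure.prod_restrict, ← Measure.volume_eq_prod, integrable_indicator_iff hlt,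
      IntegrableOn, Measure.restrict_restrict hlt]
    refine hΦ.mono_set fun p hp => ?_
    simp only [mem_inter_iff, mem_prod, mem_Ioc] at hp
    exact ⟨hp.2.1.1, hp.1, hp.2.2.2⟩
  have hleft : ∀ s ∈ Ioc (0 : ℝ) t, ∫ v in s..t, Φ s v = ∫ v in Ioc 0 t, Ψ s v := by
    intro s hs
    have h : Ψ s = (Ioi s).indicator (Φ s) := by ext v; simp [hΨ, indicator_apply]
    rw [h, setIntegral_indicator measurableSet_Ioi, Ioc_inter_Ioi, max_eq_right hs.1.le,
      intervalIntegral.integral_of_le hs.2]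
  have hright : ∀ v ∈ Ioc (0 : ℝ) t, ∫ s in (0)..v, Φ s v = ∫ s in Ioc 0 t, Ψ s v := by
    intro v hv
    have h : (fun s => Ψ s v) = (Iio v).indicator (fun s => Φ s v) := by
      ext s; simp [hΨ, indicator_apply]
    have hset : Ioc 0 t ∩ Iio v = Ioo 0 v := by
      ext s; simp only [mem_inter_iff, mem_Ioc, mem_Iio, mem_Ioo]
      constructor
      · exact fun h => ⟨h.1.1, h.2⟩
      · exact fun h => ⟨⟨h.1, h.2.le.trans hv.2⟩, h.2⟩
    rw [h, setIntegral_indicator measurableSet_Iio, hset, ← integral_Ioc_eq_integral_Ioo,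
      intervalIntegral.integral_of_le hv.1.le]
  rw [intervalIntegral.integral_of_le ht, intervalIntegral.integral_of_le ht,
    setIntegral_congr_fun measurableSet_Ioc hleft, setIntegral_congr_fun measurableSet_Ioc hright]
  exact integral_integral_swap hint

def BddMeasurable (T : ℝ) (z : ℝ → ℝ) : Prop :=
  Measurable z ∧ ∃ M, ∀ r ∈ Icc 0 T, |z r| ≤ M

namespace BddMeasurable

variable {T : ℝ} {z z₁ z₂ : ℝ → ℝ}

theorem of_continuousOn (hm : Measurable z) (hc : ContinuousOn z (Icc 0 T)) :
    BddMeasurable T z :=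
  ⟨hm, isCompact_Icc.exists_bound_of_continuousOn hc⟩

theorem mono (hz : BddMeasurable T z) {t : ℝ} (ht : t ≤ T) : BddMeasurable t z :=
  ⟨hz.1, hz.2.imp fun _ hM r hr => hM r ⟨hr.1, hr.2.trans ht⟩⟩

theorem mul_add_mul (h₁ : BddMeasurable T z₁) (h₂ : BddMeasurable T z₂) (α β : ℝ) :
    BddMeasurable T fun r => α * z₁ r + β * z₂ r := by
  obtain ⟨⟨hm₁, M₁, hM₁⟩, ⟨hm₂, M₂, hM₂⟩⟩ := And.intro h₁ h₂
  refine ⟨(hm₁.const_mul α).add (hm₂.const_mul β), |α| * M₁ + |β| * M₂, fun r hr => ?_⟩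
  calc |α * z₁ r + β * z₂ r| ≤ |α| * |z₁ r| + |β| * |z₂ r| := by
        simpa only [abs_mul] using abs_add_le (α * z₁ r) (β * z₂ r)
    _ ≤ |α| * M₁ + |β| * M₂ := by gcongr; exacts [hM₁ r hr, hM₂ r hr]

theorem integrableOn (hz : BddMeasurable T z) : IntegrableOn z (Ioc 0 T) := by
  obtain ⟨hm, M, hM⟩ := hz
  exact Measure.integrableOn_of_bounded measure_Ioc_lt_top.ne hm.aestronglyMeasurable
    (ae_restrict_of_forall_mem measurableSet_Ioc fun r hr => hM r (Ioc_subset_Icc_self hr))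

theorem intervalIntegrable (hz : BddMeasurable T z) (hT : 0 ≤ T) :
    IntervalIntegrable z volume 0 T :=
  (intervalIntegrable_iff_integrableOn_Ioc_of_le hT).2 hz.integrableOn

end BddMeasurable

noncomputable def volterraConv (F G : ℝ → ℝ) (t : ℝ) : ℝ :=
  ∫ s in (0)..t, F s * G (t - s)

theorem volterraConv_comm (F G : ℝ → ℝ) (t : ℝ) : volterraConv F G t = volterraConv G F t := by
  have h := intervalIntegral.integral_comp_sub_left (fun s => F s * G (t - s)) t (a := 0) (b := t)
  simp only [sub_sub_cancel, sub_self, sub_zero] at h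
  simp only [volterraConv, ← h, mul_comm]

theorem measurable_volterraConv {F G : ℝ → ℝ} (hF : Measurable F) (hG : Measurable G) :
    Measurable (volterraConv F G) := by
  have hΦ : Measurable (Function.uncurry fun t s => F s * G (t - s)) :=
    (hF.comp measurable_snd).mul (hG.comp (measurable_fst.sub measurable_snd))
  have h₁ := measurable_setIntegral_slice (ν := volume) (S := {p : ℝ × ℝ | 0 < p.2 ∧ p.2 ≤ p.1})
    ((measurableSet_lt measurable_const measurable_snd).inter
      (measurableSet_le measurable_snd measurable_fst)) hΦ
  have h₂ := measurable_setIntegral_slice (ν := volume) (S := {p : ℝ × ℝ | p.1 < p.2 ∧ p.2 ≤ 0})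
    ((measurableSet_lt measurable_fst measurable_snd).inter
      (measurableSet_le measurable_snd measurable_const)) hΦ
  exact h₁.sub h₂

theorem abs_volterraConv_le {F G : ℝ → ℝ} {t M : ℝ} (ht : 0 ≤ t) (hF : IntegrableOn F (Ioc 0 t))
    (hG : ∀ r ∈ Icc 0 t, |G r| ≤ M) :
    |volterraConv F G t| ≤ (∫ s in Ioc 0 t, |F s|) * M := by
  rw [volterraConv, intervalIntegral.integral_of_le ht]
  exact abs_setIntegral_mul_le measurableSet_Ioc hF
    fun s hs => hG _ ⟨by linarith [hs.2], by linarith [hs.1]⟩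

theorem BddMeasurable.volterraConv {T : ℝ} {F G : ℝ → ℝ} (hF : Measurable F)
    (hFi : IntegrableOn F (Ioc 0 T)) (hG : BddMeasurable T G) :
    BddMeasurable T (volterraConv F G) := by
  obtain ⟨hGm, M, hM⟩ := hG
  refine ⟨measurable_volterraConv hF hGm, (∫ s in Ioc 0 T, |F s|) * M, fun t ht => ?_⟩
  refine (abs_volterraConv_le ht.1 (hFi.mono_set (Ioc_subset_Ioc_right ht.2))
    fun r hr => hM r ⟨hr.1, hr.2.trans ht.2⟩).trans ?_
  exact mul_le_mul_of_nonneg_right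
    (setIntegral_mono_set hFi.norm (ae_of_all _ fun s => abs_nonneg _)
      (Ioc_subset_Ioc_right ht.2).eventuallyLE)
    ((abs_nonneg _).trans (hM 0 ⟨le_rfl, ht.1.trans ht.2⟩))

theorem intervalIntegrable_mul_comp_sub {F G : ℝ → ℝ} {t : ℝ} (ht : 0 ≤ t)
    (hF : IntegrableOn F (Ioc 0 t)) (hG : BddMeasurable t G) :
    IntervalIntegrable (fun s => F s * G (t - s)) volume 0 t := by
  obtain ⟨hGm, M, hM⟩ := hG
  rw [intervalIntegrable_iff_integrableOn_Ioc_of_le ht]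
  exact integrableOn_mul_comp_sub hF measurableSet_Ioc hGm
    fun s hs => hM _ ⟨by linarith [hs.2], by linarith [hs.1]⟩

theorem volterraConv_mul_add_mul {F G₁ G₂ : ℝ → ℝ} {t : ℝ} (ht : 0 ≤ t)
    (hF : IntegrableOn F (Ioc 0 t)) (h₁ : BddMeasurable t G₁) (h₂ : BddMeasurable t G₂)
    (α β : ℝ) :
    volterraConv F (fun r => α * G₁ r + β * G₂ r) t =
      α * volterraConv F G₁ t + β * volterraConv F G₂ t := by
  simp only [volterraConv, ← intervalIntegral.integral_const_mul]
  rw [← intervalIntegral.integral_add ((intervalIntegrable_mul_comp_sub ht hF h₁).const_mul α)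
    ((intervalIntegrable_mul_comp_sub ht hF h₂).const_mul β)]
  congr 1 with s
  ring

theorem volterraConv_assoc {F G H : ℝ → ℝ} {t : ℝ} (ht : 0 ≤ t) (hF : Measurable F)
    (hFi : IntegrableOn F (Ioc 0 t)) (hG : BddMeasurable t G) (hH : BddMeasurable t H) :
    volterraConv F (volterraConv G H) t = volterraConv (volterraConv F G) H t := by
  obtain ⟨⟨hGm, MG, hGb⟩, ⟨hHm, MH, hHb⟩⟩ := And.intro hG hH
  set T := {p : ℝ × ℝ | 0 < p.1 ∧ p.1 < p.2 ∧ p.2 ≤ t}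
  have hint : IntegrableOn (Function.uncurry fun s v => F s * G (v - s) * H (t - v)) T := by
    have hdom : IntegrableOn (fun p : ℝ × ℝ => |F p.1| * (MG * MH)) (Ioc 0 t ×ˢ Ioc 0 t) := by
      rw [IntegrableOn, Measure.volume_eq_prod, ← Measure.prod_restrict]
      exact (hFi.norm.mul_const _).comp_fst _
    refine Integrable.mono' (hdom.mono_set fun p hp => ⟨⟨hp.1, hp.2.1.le.trans hp.2.2⟩,
        ⟨hp.1.trans hp.2.1, hp.2.2⟩⟩)
      (((hF.comp measurable_fst).mul (hGm.comp (measurable_snd.sub measurable_fst))).mul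
        (hHm.comp (measurable_const.sub measurable_snd))).aestronglyMeasurable
      (ae_restrict_of_forall_mem ?_ fun p hp => ?_)
    · exact (measurableSet_lt measurable_const measurable_fst).inter
        ((measurableSet_lt measurable_fst measurable_snd).inter
          (measurableSet_le measurable_snd measurable_const))
    · obtain ⟨h0, hlt, hle⟩ := hp
      simp only [Function.uncurry, Real.norm_eq_abs, abs_mul, mul_assoc]
      exact mul_le_mul_of_nonneg_left
        (mul_le_mul (hGb _ ⟨by linarith, by linarith⟩) (hHb _ ⟨by linarith, by linarith⟩)
          (abs_nonneg _) ((abs_nonneg _).trans (hGb _ ⟨by linarith, by linarith⟩)))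
        (abs_nonneg _)
  calc volterraConv F (volterraConv G H) t
      = ∫ s in (0)..t, ∫ v in s..t, F s * G (v - s) * H (t - v) := by
        refine intervalIntegral.integral_congr fun s _ => ?_
        have h := intervalIntegral.integral_comp_sub_right
          (fun r => G r * H (t - s - r)) s (a := s) (b := t)
        simp only [sub_self, sub_sub_sub_cancel_right] at h
        simp only [volterraConv, mul_assoc, intervalIntegral.integral_const_mul, h]
    _ = ∫ v in (0)..t, ∫ s in (0)..v, F s * G (v - s) * H (t - v) :=
        intervalIntegral_triangle_swap ht hint
    _ = volterraConv (volterraConv F G) H t := by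
        simp only [volterraConv, intervalIntegral.integral_mul_const]

noncomputable def volterraOp (a b : ℝ) (K z : ℝ → ℝ) (t : ℝ) : ℝ :=
  ∫ u in (0)..t, (a * z u + b * volterraConv K z u)

theorem volterraOp_mul_add_mul {a b t : ℝ} {K z₁ z₂ : ℝ → ℝ} (ht : 0 ≤ t) (hK : Measurable K)
    (hKi : IntegrableOn K (Ioc 0 t)) (h₁ : BddMeasurable t z₁) (h₂ : BddMeasurable t z₂)
    (α β : ℝ) :
    volterraOp a b K (fun r => α * z₁ r + β * z₂ r) t =
      α * volterraOp a b K z₁ t + β * volterraOp a b K z₂ t := by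
  have hint : ∀ {z}, BddMeasurable t z →
      IntervalIntegrable (fun u => a * z u + b * volterraConv K z u) volume 0 t :=
    fun hz => (hz.mul_add_mul (hz.volterraConv hK hKi) a b).intervalIntegrable ht
  simp only [volterraOp, ← intervalIntegral.integral_const_mul]
  rw [← intervalIntegral.integral_add ((hint h₁).const_mul α) ((hint h₂).const_mul β)]
  refine intervalIntegral.integral_congr fun u hu => ?_
  rw [uIcc_of_le ht] at hu
  simp only [volterraConv_mul_add_mul hu.1 (hKi.mono_set (Ioc_subset_Ioc_right hu.2))
    (h₁.mono hu.2) (h₂.mono hu.2)]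
  ring

theorem abs_volterraIntegrand_le {a b T u D : ℝ} {K z : ℝ → ℝ} (hK : IntegrableOn K (Ioc 0 T))
    (hu : u ∈ Icc 0 T) (hz : ∀ r ∈ Icc 0 u, |z r| ≤ D) :
    |a * z u + b * volterraConv K z u| ≤ (|a| + |b| * ∫ s in Ioc 0 T, |K s|) * D := by
  have hD : 0 ≤ D := (abs_nonneg _).trans (hz u ⟨hu.1, le_rfl⟩)
  have hconv : |volterraConv K z u| ≤ (∫ s in Ioc 0 T, |K s|) * D :=
    (abs_volterraConv_le hu.1 (hK.mono_set (Ioc_subset_Ioc_right hu.2)) hz).trans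
      (mul_le_mul_of_nonneg_right (setIntegral_mono_set hK.norm
        (ae_of_all _ fun s => abs_nonneg _) (Ioc_subset_Ioc_right hu.2).eventuallyLE) hD)
  calc |a * z u + b * volterraConv K z u|
      ≤ |a| * |z u| + |b| * |volterraConv K z u| := by
        simpa only [abs_mul] using abs_add_le (a * z u) (b * volterraConv K z u)
    _ ≤ |a| * D + |b| * ((∫ s in Ioc 0 T, |K s|) * D) :=
        add_le_add (mul_le_mul_of_nonneg_left (hz u ⟨hu.1, le_rfl⟩) (abs_nonneg a))
          (mul_le_mul_of_nonneg_left hconv (abs_nonneg b))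
    _ = (|a| + |b| * ∫ s in Ioc 0 T, |K s|) * D := by ring

theorem abs_le_of_eq_volterraOp {a b T B : ℝ} {K z : ℝ → ℝ} (hK : IntegrableOn K (Ioc 0 T))
    (hB : ∀ t ∈ Icc 0 T, |z t| ≤ B) (hz : ∀ t ∈ Icc 0 T, z t = volterraOp a b K z t) (n : ℕ) :
    ∀ t ∈ Icc 0 T,
      |z t| ≤ B * ((|a| + |b| * ∫ s in Ioc 0 T, |K s|) * t) ^ n / n.factorial := by
  set c := |a| + |b| * ∫ s in Ioc 0 T, |K s|
  have hc : 0 ≤ c := by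
    have := setIntegral_nonneg (μ := volume) measurableSet_Ioc fun s (_ : s ∈ Ioc 0 T) =>
      abs_nonneg (K s)
    positivity
  induction n with
  | zero => simpa using hB
  | succ n ih =>
    intro t ht
    have hB0 : 0 ≤ B := (abs_nonneg _).trans (hB t ht)
    have hintegrand : ∀ u ∈ Ioc 0 t,
        |a * z u + b * volterraConv K z u| ≤ c * (B * (c * u) ^ n / n.factorial) := by
      intro u hu
      refine abs_volterraIntegrand_le hK ⟨hu.1.le, hu.2.trans ht.2⟩ fun r hr =>
        (ih r ⟨hr.1, hr.2.trans (hu.2.trans ht.2)⟩).trans ?_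
      have := hr.1
      gcongr
      exact hr.2
    have hpoly : ∫ u in (0)..t, c * (B * (c * u) ^ n / n.factorial) =
        B * (c * t) ^ (n + 1) / (n + 1).factorial := by
      have h : (fun u : ℝ => c * (B * (c * u) ^ n / n.factorial)) =
          fun u => c ^ (n + 1) * B / n.factorial * u ^ n := by
        ext u
        rw [pow_succ, mul_pow]
        ring
      rw [h, intervalIntegral.integral_const_mul, integral_pow, Nat.factorial_succ,
        zero_pow n.succ_ne_zero, sub_zero, mul_pow]
      push_cast
      field_simp
    calc |z t| = ‖volterraOp a b K z t‖ := by rw [Real.norm_eq_abs, ← hz t ht]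
      _ ≤ ∫ u in (0)..t, c * (B * (c * u) ^ n / n.factorial) :=
          intervalIntegral.norm_integral_le_of_norm_le ht.1 (ae_of_all _ hintegrand)
            ((by fun_prop : Continuous _).intervalIntegrable _ _)
      _ = _ := hpoly

theorem eqOn_zero_of_eq_volterraOp {a b T B : ℝ} {K z : ℝ → ℝ} (hK : IntegrableOn K (Ioc 0 T))
    (hB : ∀ t ∈ Icc 0 T, |z t| ≤ B) (hz : ∀ t ∈ Icc 0 T, z t = volterraOp a b K z t) :
    ∀ t ∈ Icc 0 T, z t = 0 := by
  intro t ht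
  have hlim := (FloorSemiring.tendsto_pow_div_factorial_atTop
    ((|a| + |b| * ∫ s in Ioc 0 T, |K s|) * t)).const_mul B
  rw [mul_zero] at hlim
  simp only [← mul_div_assoc] at hlim
  exact abs_nonpos_iff.1 (ge_of_tendsto hlim (Filter.Eventually.of_forall fun n =>
    abs_le_of_eq_volterraOp hK hB hz n t ht))

theorem volterraConv_eq_of_fundamental {a b T : ℝ} {K X f : ℝ → ℝ} (hK : Measurable K)
    (hKi : IntegrableOn K (Ioc 0 T)) (hX : BddMeasurable T X) (hf : BddMeasurable T f)
    (hXeq : ∀ t ∈ Icc 0 T, X t = 1 + volterraOp a b K X t) :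
    ∀ t ∈ Icc 0 T,
      volterraConv f X t = (∫ u in (0)..t, f u) + volterraOp a b K (volterraConv f X) t := by
  set E := fun u => a * X u + b * volterraConv K X u
  have hE : BddMeasurable T E := hX.mul_add_mul (hX.volterraConv hK hKi) a b
  have hfE : ∀ u ∈ Icc 0 T,
      volterraConv f E u = a * volterraConv f X u + b * volterraConv K (volterraConv f X) u := by
    intro u hu
    have hXf : volterraConv X f = volterraConv f X := funext (volterraConv_comm X f)
    rw [volterraConv_mul_add_mul hu.1 (hf.mono hu.2).integrableOn (hX.mono hu.2)
      ((hX.volterraConv hK hKi).mono hu.2), volterraConv_comm f (volterraConv K X),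
      ← volterraConv_assoc hu.1 hK (hKi.mono_set (Ioc_subset_Ioc_right hu.2)) (hX.mono hu.2)
        (hf.mono hu.2), hXf]
  have hone : BddMeasurable T fun _ => 1 := ⟨measurable_const, 1, fun _ _ => by simp⟩
  intro t ht
  have hft := (hf.mono ht.2).integrableOn
  -- `X - 1 = E ⋆ 1` (`E` is `X'`), so `f ⋆ X - ∫ f = f ⋆ (E ⋆ 1) = (f ⋆ E) ⋆ 1`.
  calc volterraConv f X t
      = (∫ u in (0)..t, f u) + ∫ s in (0)..t, f s * (X (t - s) - 1) := by
        rw [volterraConv, ← sub_eq_iff_eq_add', ← intervalIntegral.integral_sub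
          (intervalIntegrable_mul_comp_sub ht.1 hft (hX.mono ht.2))
          ((hf.mono ht.2).intervalIntegrable ht.1)]
        congr 1 with s
        ring
    _ = (∫ u in (0)..t, f u) + volterraConv f (volterraConv E fun _ => 1) t := by
        congr 1
        refine intervalIntegral.integral_congr fun s hs => ?_
        rw [uIcc_of_le ht.1] at hs
        rw [hXeq (t - s) ⟨by linarith [hs.2], by linarith [hs.1, ht.2]⟩, add_sub_cancel_left]
        simp only [volterraOp, volterraConv, mul_one, E]
    _ = (∫ u in (0)..t, f u) + ∫ u in (0)..t, volterraConv f E u := by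
        rw [volterraConv_assoc ht.1 hf.1 hft (hE.mono ht.2) (hone.mono ht.2)]
        simp only [volterraConv, mul_one]
    _ = (∫ u in (0)..t, f u) + volterraOp a b K (volterraConv f X) t := by
        congr 1
        refine intervalIntegral.integral_congr fun u hu => ?_
        rw [uIcc_of_le ht.1] at hu
        exact hfE u ⟨hu.1, hu.2.trans ht.2⟩

theorem eq_fundamental_mul_add_volterraConv {a b T : ℝ} {K X f y : ℝ → ℝ} (hK : Measurable K)
    (hKi : IntegrableOn K (Ioc 0 T)) (hX : BddMeasurable T X) (hf : BddMeasurable T f)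
    (hy : BddMeasurable T y) (hXeq : ∀ t ∈ Icc 0 T, X t = 1 + volterraOp a b K X t)
    (hyeq : ∀ t ∈ Icc 0 T, y t = y 0 + b * (∫ u in (0)..t, f u) + volterraOp a b K y t) :
    ∀ t ∈ Icc 0 T, y t = X t * y 0 + b * volterraConv f X t := by
  set g := fun r => y 0 * X r + b * volterraConv f X r
  have hg : BddMeasurable T g := hX.mul_add_mul (hX.volterraConv hf.1 hf.integrableOn) (y 0) b
  have hgeq : ∀ t ∈ Icc 0 T, g t = y 0 + b * (∫ u in (0)..t, f u) + volterraOp a b K g t := by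
    intro t ht
    rw [volterraOp_mul_add_mul ht.1 hK (hKi.mono_set (Ioc_subset_Ioc_right ht.2)) (hX.mono ht.2)
      ((hX.volterraConv hf.1 hf.integrableOn).mono ht.2)]
    simp only [g]
    rw [hXeq t ht, volterraConv_eq_of_fundamental hK hKi hX hf hXeq t ht]
    ring
  have hz : ∀ t ∈ Icc 0 T, (fun r => 1 * y r + -1 * g r) t =
      volterraOp a b K (fun r => 1 * y r + -1 * g r) t := by
    intro t ht
    rw [volterraOp_mul_add_mul ht.1 hK (hKi.mono_set (Ioc_subset_Ioc_right ht.2)) (hy.mono ht.2)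
      (hg.mono ht.2)]
    simp only
    rw [hyeq t ht, hgeq t ht]
    ring
  obtain ⟨B, hB⟩ := (hy.mul_add_mul hg 1 (-1)).2
  intro t ht
  linear_combination eqOn_zero_of_eq_volterraOp hKi hB hz t ht

theorem setIntegral_Ioi_eq_volterraConv_add {K y : ℝ → ℝ} {u M : ℝ} (hu : 0 ≤ u)
    (hK : IntegrableOn K (Ioi 0)) (hy : Measurable y) (hyb : ∀ r ≤ u, |y r| ≤ M) :
    ∫ s in Ioi 0, K s * y (u - s) = volterraConv K y u + ∫ s in Ioi u, K s * y (u - s) := by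
  have hint : ∀ S ⊆ Ioi (0 : ℝ), MeasurableSet S → IntegrableOn (fun s => K s * y (u - s)) S :=
    fun S hS hSm => integrableOn_mul_comp_sub (hK.mono_set hS) hSm hy
      fun s hs => hyb _ (by linarith [mem_Ioi.1 (hS hs)])
  rw [← Ioc_union_Ioi_eq_Ioi hu, setIntegral_union (Ioc_disjoint_Ioi le_rfl) measurableSet_Ioi
    (hint _ Ioc_subset_Ioi_self measurableSet_Ioc) (hint _ (Ioi_subset_Ioi hu) measurableSet_Ioi),
    volterraConv, intervalIntegral.integral_of_le hu]

theorem setIntegral_Ioi_eq_volterraConv {K X : ℝ → ℝ} {u : ℝ} (hu : 0 ≤ u)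
    (hX : ∀ t < 0, X t = 0) :
    ∫ s in Ioi 0, K s * X (u - s) = volterraConv K X u := by
  rw [volterraConv, intervalIntegral.integral_of_le hu,
    setIntegral_eq_of_subset_of_forall_sdiff_eq_zero measurableSet_Ioi Ioc_subset_Ioi_self]
  rintro s ⟨hs0, hsu⟩
  have hus : u < s := by
    simp only [mem_Ioc, not_and, not_le] at hsu
    exact hsu hs0
  rw [hX _ (by linarith), mul_zero]

noncomputable def historyForcing (K x : ℝ → ℝ) (s : ℝ) : ℝ :=
  ∫ θ in Ioi s, K θ * x (s - θ)

theorem bddMeasurable_historyForcing {K x : ℝ → ℝ} {C T : ℝ} (hK : Measurable K)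
    (hKi : IntegrableOn K (Ioi 0)) (hx : Measurable x) (hxC : ∀ r ≤ 0, |x r| ≤ C) :
    BddMeasurable T (historyForcing K x) := by
  refine ⟨measurable_setIntegral_slice (S := {p : ℝ × ℝ | p.1 < p.2})
    (measurableSet_lt measurable_fst measurable_snd)
    ((hK.comp measurable_snd).mul (hx.comp (measurable_fst.sub measurable_snd))),
    (∫ θ in Ioi 0, |K θ|) * C, fun s hs => ?_⟩
  refine (abs_setIntegral_mul_le measurableSet_Ioi (hKi.mono_set (Ioi_subset_Ioi hs.1))
    fun θ hθ => hxC _ (by linarith [mem_Ioi.1 hθ, hs.1])).trans ?_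
  exact mul_le_mul_of_nonneg_right
    (setIntegral_mono_set hKi.norm (ae_of_all _ fun s => abs_nonneg _)
      (Ioi_subset_Ioi hs.1).eventuallyLE)
    ((abs_nonneg _).trans (hxC 0 le_rfl))

namespace IsFundamental

variable {a b : ℝ} {K X : ℝ → ℝ}

theorem measurable (hX : IsFundamental a b K X) : Measurable X := by
  have h : (Ici 0).piecewise X 0 = X := by
    ext t
    by_cases ht : 0 ≤ t
    · simp [ht]
    · simp [ht, hX.1 t (not_le.1 ht)]
  rw [← h]
  exact hX.2.2.1.measurable_piecewise continuousOn_const measurableSet_Ici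

theorem eq_one_add_volterraOp (hX : IsFundamental a b K X) :
    ∀ r ≥ 0, X r = 1 + volterraOp a b K X r := by
  intro r hr
  rw [hX.2.2.2 r hr, volterraOp]
  refine congrArg _ (intervalIntegral.integral_congr fun u hu => ?_)
  rw [uIcc_of_le hr] at hu
  simp only [setIntegral_Ioi_eq_volterraConv hu.1 hX.1]

end IsFundamental

namespace IsSolution

variable {a b : ℝ} {K φ x : ℝ → ℝ}

theorem continuous (hx : IsSolution a b K φ x) (hφ : ContinuousOn φ (Iic 0)) : Continuous x := by
  rw [← continuousOn_univ, ← Iic_union_Ici (a := (0 : ℝ))]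
  exact (hφ.congr hx.1).union_of_isClosed hx.2.1 isClosed_Iic isClosed_Ici

theorem eq_add_volterraOp (hx : IsSolution a b K φ x) (hK : Measurable K)
    (hKi : IntegrableOn K (Ioi 0)) (hxc : Continuous x) {C : ℝ} (hxC : ∀ r ≤ 0, |x r| ≤ C) :
    ∀ r ≥ 0, x r = x 0 + b * (∫ u in (0)..r, historyForcing K x u) + volterraOp a b K x r := by
  intro r hr
  have hxB : BddMeasurable r x := .of_continuousOn hxc.measurable hxc.continuousOn
  have hfB : BddMeasurable r (historyForcing K x) :=
    bddMeasurable_historyForcing hK hKi hxc.measurable hxC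
  obtain ⟨M, hM⟩ := hxB.2
  have hsplit : ∀ u ∈ uIcc 0 r, a * x u + b * ∫ s in Ioi 0, K s * x (u - s) =
      (a * x u + b * volterraConv K x u) + b * historyForcing K x u := by
    intro u hu
    rw [uIcc_of_le hr] at hu
    rw [setIntegral_Ioi_eq_volterraConv_add (M := max M C) hu.1 hKi hxc.measurable
      fun v hv => ?_, historyForcing]
    · ring
    by_cases hv0 : 0 ≤ v
    · exact (hM v ⟨hv0, hv.trans hu.2⟩).trans (le_max_left _ _)
    · exact (hxC v (le_of_not_ge hv0)).trans (le_max_right _ _)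
  rw [hx.2.2 r hr, ← hx.1 0 le_rfl, intervalIntegral.integral_congr hsplit,
    intervalIntegral.integral_add
      ((hxB.mul_add_mul (hxB.volterraConv hK (hKi.mono_set Ioc_subset_Ioi_self)) a b
        ).intervalIntegrable hr) ((hfB.intervalIntegrable hr).const_mul b),
    intervalIntegral.integral_const_mul, volterraOp]
  ring

end IsSolution

theorem stmt1_general (a b : ℝ) (K : ℝ → ℝ)
    (hKmeas : Measurable K)
    (hKint : IntegrableOn K (Set.Ioi 0))
    (φ x X : ℝ → ℝ)
    (hφc : ContinuousOn φ (Set.Iic 0))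
    (hφb : ∃ C, ∀ θ ≤ (0 : ℝ), |φ θ| ≤ C)
    (hx : IsSolution a b K φ x)
    (hX : IsFundamental a b K X) :
    ∀ t ≥ (0 : ℝ),
      x t = X t * φ 0 +
        b * ∫ s in (0 : ℝ)..t, X (t - s) * ∫ θ in Set.Ioi s, K θ * φ (s - θ) := by
  obtain ⟨C, hC⟩ := hφb
  have hxc : Continuous x := hx.continuous hφc
  have hxC : ∀ r ≤ 0, |x r| ≤ C := fun r hr => hx.1 r hr ▸ hC r hr
  have hf : ∀ s, historyForcing K x s = ∫ θ in Ioi s, K θ * φ (s - θ) := fun s =>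
    setIntegral_congr_fun measurableSet_Ioi fun θ hθ => by
      rw [hx.1 _ (by linarith [mem_Ioi.1 hθ])]
  intro t ht
  have hvoc := eq_fundamental_mul_add_volterraConv hKmeas (hKint.mono_set Ioc_subset_Ioi_self)
    (.of_continuousOn hX.measurable (hX.2.2.1.mono Icc_subset_Ici_self))
    (bddMeasurable_historyForcing hKmeas hKint hxc.measurable hxC)
    (.of_continuousOn hxc.measurable hxc.continuousOn)
    (fun r hr => hX.eq_one_add_volterraOp r hr.1)
    (fun r hr => hx.eq_add_volterraOp hKmeas hKint hxc hxC r hr.1) t ⟨ht, le_rfl⟩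
  rw [hvoc, hx.1 0 le_rfl, volterraConv]
  simp only [hf, mul_comm _ (X _)]

theorem stmt1 (a b μ : ℝ) (K : ℝ → ℝ)
    (hKmeas : Measurable K) (hKpos : ∀ s ≥ (0 : ℝ), 0 ≤ K s)
    (hKint : IntegrableOn K (Set.Ioi 0))
    (hKone : (∫ s in Set.Ioi (0 : ℝ), K s) = 1)
    (hμ : 0 < μ)
    (hρint : IntegrableOn (fun s => Real.exp (μ * s) * K s) (Set.Ioi 0))
    (φ x X : ℝ → ℝ)
    (hφc : ContinuousOn φ (Set.Iic 0))
    (hφb : ∃ C, ∀ θ ≤ (0 : ℝ), |φ θ| ≤ C)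
    (hx : IsSolution a b K φ x)
    (hX : IsFundamental a b K X) :
    ∀ t ≥ (0 : ℝ),
      x t = X t * φ 0 +
        b * ∫ s in (0 : ℝ)..t, X (t - s) * ∫ θ in Set.Ioi s, K θ * φ (s - θ) :=
  stmt1_general a b K hKmeas hKint φ x X hφc hφb hx hX
end

section
/- Let α₁ ∈ ℝ and suppose there exists λ* ∈ ℂ with Re λ* > α₁, Re λ* > −μ, and h(λ*) = 0. Then there exist a real number ᾱ > α₁ and a Lebesgue-measurable set U ⊆ [0,∞) of infinite Lebesgue measure such that |X(t)| ≥ e^{ᾱt} for every t ∈ U. -/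
/-! If the set where `|X t| ≥ e^{αt}` had finite measure for some `α` with `α₁ < α < Re λ*`,
then `X` would grow at most like `e^{γt}` for any `γ ∈ (α, Re λ*)`: on a short window the delay
equation moves `X` by at most half its running maximum `sup_{s ≤ t} |X s| e^{-γs}`, and far out
every such window meets a point where `|X| < e^{αt}`, which caps the running maximum. With this
growth bound the Laplace transform `X̂` converges at `λ*`, and transforming the equation
(`λ X̂ - 1 = a X̂ + b K̂ X̂`) gives `h(λ*) X̂(λ*) = 1`, contradicting `h(λ*) = 0`. -/

open MeasureTheory Real Set

/-- The characteristic function `h(λ) = λ - a - b ∫₀^∞ e^{-λ s} K(s) ds`. -/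
noncomputable def charFn (a b : ℝ) (K : ℝ → ℝ) (z : ℂ) : ℂ :=
  z - (a : ℂ) - (b : ℂ) * ∫ s in Set.Ioi (0 : ℝ), Complex.exp (-z * s) * (K s : ℂ)

open Filter Topology
open scoped Complex ENNReal

section Laplace

noncomputable def laplace (f : ℝ → ℝ) (z : ℂ) : ℂ := ∫ t : ℝ in Ioi 0, cexp (-z * t) * f t

theorem charFn_eq (a b : ℝ) (K : ℝ → ℝ) (z : ℂ) :
    charFn a b K z = z - a - b * laplace K z := rfl

theorem norm_cexp_neg_mul (z : ℂ) (t : ℝ) : ‖cexp (-z * t)‖ = rexp (-z.re * t) := by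
  simp [Complex.norm_exp, Complex.mul_re]

variable {f : ℝ → ℝ} {z : ℂ} {C γ : ℝ}

theorem norm_cexp_neg_mul_mul_le {t : ℝ} (hb : |f t| ≤ C * rexp (γ * t)) :
    ‖cexp (-z * t) * f t‖ ≤ C * rexp (-(z.re - γ) * t) := by
  rw [norm_mul, norm_cexp_neg_mul, Complex.norm_real, Real.norm_eq_abs]
  calc rexp (-z.re * t) * |f t| ≤ rexp (-z.re * t) * (C * rexp (γ * t)) := by gcongr
    _ = C * rexp (-(z.re - γ) * t) := by rw [mul_left_comm, ← Real.exp_add]; ring_nf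

theorem integrableOn_laplace_of_abs_le (hf : AEStronglyMeasurable f (volume.restrict (Ioi 0)))
    (hb : ∀ t > 0, |f t| ≤ C * rexp (γ * t)) (hγ : γ < z.re) :
    IntegrableOn (fun t : ℝ => cexp (-z * t) * f t) (Ioi 0) := by
  refine Integrable.mono' ((exp_neg_integrableOn_Ioi 0 (sub_pos.2 hγ)).const_mul C)
    ((by fun_prop : Continuous fun t : ℝ => cexp (-z * t)).aestronglyMeasurable.mul
      (Complex.continuous_ofReal.comp_aestronglyMeasurable hf)) ?_
  filter_upwards [self_mem_ae_restrict measurableSet_Ioi] with t ht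
  exact norm_cexp_neg_mul_mul_le (hb t ht)

theorem integrableOn_laplace_of_integrableOn
    (hf : AEStronglyMeasurable f (volume.restrict (Ioi 0)))
    (hfγ : IntegrableOn (fun t => f t * rexp (-γ * t)) (Ioi 0)) (hγ : γ ≤ z.re) :
    IntegrableOn (fun t : ℝ => cexp (-z * t) * f t) (Ioi 0) := by
  refine hfγ.norm.mono'
    ((by fun_prop : Continuous fun t : ℝ => cexp (-z * t)).aestronglyMeasurable.mul
      (Complex.continuous_ofReal.comp_aestronglyMeasurable hf)) ?_
  filter_upwards [self_mem_ae_restrict measurableSet_Ioi] with t ht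
  rw [norm_mul, norm_cexp_neg_mul, Complex.norm_real, norm_mul,
    Real.norm_of_nonneg (exp_pos _).le, mul_comm]
  gcongr
  nlinarith [mem_Ioi.1 ht]

theorem integrableOn_mul_exp_neg_of_le {μ : ℝ}
    (hf : IntegrableOn (fun s => rexp (μ * s) * f s) (Ioi 0)) (hγ : -μ ≤ γ) :
    IntegrableOn (fun s => f s * rexp (-γ * s)) (Ioi 0) := by
  have h := hf.bdd_mul (c := 1) (f := fun s => rexp (-(γ + μ) * s)) (by fun_prop) (by
    filter_upwards [self_mem_ae_restrict measurableSet_Ioi] with s hs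
    rw [Real.norm_of_nonneg (exp_pos _).le, exp_le_one_iff]
    nlinarith [mem_Ioi.1 hs])
  refine h.congr (Eventually.of_forall fun s => ?_)
  dsimp only
  rw [← mul_assoc, ← Real.exp_add]
  ring_nf

theorem tendsto_cexp_mul_of_abs_le (hb : ∀ t > 0, |f t| ≤ C * rexp (γ * t)) (hγ : γ < z.re) :
    Tendsto (fun t : ℝ => cexp (-z * t) * f t) atTop (𝓝 0) := by
  refine squeeze_zero_norm' ?_ (by
    simpa using ((tendsto_exp_atBot.comp
      (tendsto_id.const_mul_atTop_of_neg (neg_lt_zero.2 (sub_pos.2 hγ)))).const_mul C))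
  filter_upwards [eventually_gt_atTop 0] with t ht
  exact (norm_cexp_neg_mul_mul_le (hb t ht)).trans_eq (by ring_nf)

theorem laplace_deriv {f' : ℝ → ℝ} {C' : ℝ} (hγ : γ < z.re)
    (hf : ContinuousWithinAt f (Ici 0) 0) (hderiv : ∀ t > 0, HasDerivAt f (f' t) t)
    (hf'm : AEStronglyMeasurable f' (volume.restrict (Ioi 0)))
    (hfb : ∀ t > 0, |f t| ≤ C * rexp (γ * t)) (hf'b : ∀ t > 0, |f' t| ≤ C' * rexp (γ * t)) :
    laplace f' z = z * laplace f z - f 0 := by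
  have hfm : AEStronglyMeasurable f (volume.restrict (Ioi 0)) :=
    ContinuousOn.aestronglyMeasurable
      (fun t ht => (hderiv t ht).continuousAt.continuousWithinAt) measurableSet_Ioi
  have hint := integrableOn_laplace_of_abs_le hfm hfb hγ
  have hint' := integrableOn_laplace_of_abs_le hf'm hf'b hγ
  have hE (t : ℝ) : HasDerivAt (fun t : ℝ => cexp (-z * t)) (-z * cexp (-z * t)) t := by
    simpa [mul_comm] using ((hasDerivAt_id (t : ℂ)).const_mul (-z)).cexp.comp_ofReal
  have key := integral_Ioi_of_hasDerivAt_of_tendsto (m := 0)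
    (f := fun t : ℝ => cexp (-z * t) * f t)
    (f' := fun t : ℝ => -z * (cexp (-z * t) * f t) + cexp (-z * t) * f' t)
    ((by fun_prop : Continuous fun t : ℝ => cexp (-z * t)).continuousWithinAt.mul
      (Complex.continuous_ofReal.continuousAt.comp_continuousWithinAt hf))
    (fun t ht => ((hE t).mul (hderiv t ht).ofReal_comp).congr_deriv (by ring))
    ((hint.const_mul _).add hint') (tendsto_cexp_mul_of_abs_le hfb hγ)
  rw [integral_add (hint.const_mul _) hint', integral_const_mul] at key
  simp only [Complex.ofReal_zero, mul_zero, Complex.exp_zero, one_mul, zero_sub] at key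
  rw [laplace, laplace]
  linear_combination key

theorem laplace_comp_sub {X : ℝ → ℝ} (hX : ∀ t < 0, X t = 0) (z : ℂ) {s : ℝ} (hs : 0 < s) :
    ∫ u : ℝ in Ioi 0, cexp (-z * u) * X (u - s) = cexp (-z * s) * laplace X z := by
  have hzero : ∀ u ∉ Ioi (0 : ℝ), cexp (-z * u) * X (u - s) = 0 := fun u hu => by
    rw [mem_Ioi, not_lt] at hu
    rw [hX _ (by linarith)]; simp
  rw [setIntegral_eq_integral_of_forall_compl_eq_zero hzero,
    ← integral_add_right_eq_self _ s, laplace, ← integral_Ici_eq_integral_Ioi,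
    setIntegral_eq_integral_of_forall_compl_eq_zero (fun u hu => by
      rw [hX u (not_le.1 hu)]; simp), ← integral_const_mul]
  congr 1 with u
  rw [add_sub_cancel_right, Complex.ofReal_add, mul_add, Complex.exp_add]
  ring

end Laplace

section KernelConv

noncomputable def kernelConv (K X : ℝ → ℝ) (u : ℝ) : ℝ := ∫ s in Ioi 0, K s * X (u - s)

noncomputable def kernelNorm (K : ℝ → ℝ) (γ : ℝ) : ℝ := ∫ s in Ioi 0, |K s * rexp (-γ * s)|

theorem kernelNorm_nonneg (K : ℝ → ℝ) (γ : ℝ) : 0 ≤ kernelNorm K γ :=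
  integral_nonneg fun _ => abs_nonneg _

variable {K X : ℝ → ℝ} {γ : ℝ}

theorem measurable_kernelConv (hK : Measurable K) (hX : Measurable X) :
    Measurable (kernelConv K X) :=
  (StronglyMeasurable.integral_prod_right (f := fun u s => K s * X (u - s))
    ((hK.comp measurable_snd).mul
      (hX.comp (measurable_fst.sub measurable_snd))).stronglyMeasurable).measurable

theorem norm_mul_comp_sub_le {D u s : ℝ} (hX : |X (u - s)| ≤ D * rexp (γ * (u - s))) :
    ‖K s * X (u - s)‖ ≤ D * rexp (γ * u) * ‖K s * rexp (-γ * s)‖ := by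
  rw [norm_mul, norm_mul, Real.norm_of_nonneg (exp_pos _).le, Real.norm_eq_abs, Real.norm_eq_abs]
  calc |K s| * |X (u - s)| ≤ |K s| * (D * rexp (γ * (u - s))) := by gcongr
    _ = D * rexp (γ * u) * (|K s| * rexp (-γ * s)) := by
      rw [show γ * (u - s) = γ * u + -γ * s by ring, Real.exp_add]; ring

theorem abs_kernelConv_le {D u : ℝ} (hK : IntegrableOn (fun s => K s * rexp (-γ * s)) (Ioi 0))
    (hX : ∀ v ≤ u, |X v| ≤ D * rexp (γ * v)) :
    |kernelConv K X u| ≤ D * kernelNorm K γ * rexp (γ * u) := by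
  rw [← Real.norm_eq_abs, mul_right_comm, kernelNorm, ← integral_const_mul]
  refine norm_integral_le_of_norm_le (hK.norm.const_mul _) ?_
  filter_upwards [self_mem_ae_restrict measurableSet_Ioi] with s hs
  exact norm_mul_comp_sub_le (hX _ (by linarith [mem_Ioi.1 hs]))

theorem continuousAt_kernelConv {C u₀ : ℝ} (hKm : Measurable K) (hXm : Measurable X)
    (hK : IntegrableOn (fun s => K s * rexp (-γ * s)) (Ioi 0))
    (hXc : ∀ t ≠ 0, ContinuousAt X t) (hXb : ∀ t, |X t| ≤ C * rexp (γ * t)) :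
    ContinuousAt (kernelConv K X) u₀ := by
  have hnear : ∀ᶠ u in 𝓝 u₀, γ * u < γ * u₀ + 1 :=
    (continuous_const.mul continuous_id).continuousAt.eventually_lt continuousAt_const
      (lt_add_one _)
  refine continuousAt_of_dominated
    (bound := fun s => C * rexp (γ * u₀ + 1) * ‖K s * rexp (-γ * s)‖)
    (Eventually.of_forall fun u => (hKm.mul (hXm.comp (measurable_const.sub measurable_id))
      ).aestronglyMeasurable) ?_ (hK.norm.const_mul _) ?_
  · filter_upwards [hnear] with u hu
    refine Eventually.of_forall fun s => (norm_mul_comp_sub_le (hXb _)).trans ?_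
    have hC : 0 ≤ C := nonneg_of_mul_nonneg_left ((abs_nonneg _).trans (hXb 0)) (exp_pos _)
    gcongr
  · filter_upwards [ae_restrict_of_ae (Measure.ae_ne volume u₀)] with s hs
    exact continuousAt_const.mul
      ((hXc (u₀ - s) (sub_ne_zero.2 hs.symm)).comp (f := fun u => u - s) (by fun_prop))

theorem laplace_kernelConv {z : ℂ} {C : ℝ} (hKm : Measurable K) (hXm : Measurable X)
    (hK : IntegrableOn (fun s => K s * rexp (-γ * s)) (Ioi 0))
    (hX0 : ∀ t < 0, X t = 0) (hXb : ∀ t, |X t| ≤ C * rexp (γ * t)) (hγ : γ < z.re) :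
    laplace (kernelConv K X) z = laplace K z * laplace X z := by
  have hprod :
      Integrable (Function.uncurry fun u s : ℝ => cexp (-z * u) * (K s * X (u - s) : ℝ))
        ((volume.restrict (Ioi 0)).prod (volume.restrict (Ioi 0))) := by
    refine Integrable.mono'
      (((exp_neg_integrableOn_Ioi 0 (sub_pos.2 hγ)).const_mul C).mul_prod hK.norm)
      (Measurable.aestronglyMeasurable (by fun_prop)) (Eventually.of_forall fun p => ?_)
    rw [Function.uncurry_apply_pair, norm_mul, norm_cexp_neg_mul, Complex.norm_real]
    calc rexp (-z.re * p.1) * ‖K p.2 * X (p.1 - p.2)‖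
        ≤ rexp (-z.re * p.1) * (C * rexp (γ * p.1) * ‖K p.2 * rexp (-γ * p.2)‖) := by
          gcongr; exact norm_mul_comp_sub_le (hXb _)
      _ = C * rexp (-(z.re - γ) * p.1) * ‖K p.2 * rexp (-γ * p.2)‖ := by
          rw [show -(z.re - γ) * p.1 = γ * p.1 + -z.re * p.1 by ring, Real.exp_add]
          ring
  calc laplace (kernelConv K X) z
      = ∫ u : ℝ in Ioi 0, ∫ s : ℝ in Ioi 0, cexp (-z * u) * (K s * X (u - s) : ℝ) := by
        simp only [laplace, kernelConv, integral_const_mul, integral_complex_ofReal]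
    _ = ∫ s : ℝ in Ioi 0, ∫ u : ℝ in Ioi 0, cexp (-z * u) * (K s * X (u - s) : ℝ) :=
        integral_integral_swap hprod
    _ = ∫ s : ℝ in Ioi 0, cexp (-z * s) * K s * laplace X z := by
        refine setIntegral_congr_fun measurableSet_Ioi fun s hs => ?_
        simp only [Complex.ofReal_mul, mul_left_comm _ (K s : ℂ), integral_const_mul,
          laplace_comp_sub hX0 z hs]
        ring
    _ = laplace K z * laplace X z := by rw [integral_mul_const]; rfl

end KernelConv

theorem le_mul_exp_of_mul_exp_neg_le {x M γ t : ℝ} (h : x * rexp (-γ * t) ≤ M) :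
    x ≤ M * rexp (γ * t) :=
  calc x = x * rexp (-γ * t) * rexp (γ * t) := by
        rw [mul_assoc, ← Real.exp_add, neg_mul, neg_add_cancel, exp_zero, mul_one]
    _ ≤ M * rexp (γ * t) := by gcongr

theorem ContinuousOn.exists_forall_le_of_isMaxOn_Icc {φ : ℝ → ℝ} {t₀ B : ℝ}
    (hφ : ContinuousOn φ (Ici 0)) (h : ∀ t₁, t₀ < t₁ → IsMaxOn φ (Icc 0 t₁) t₁ → φ t₁ ≤ B) :
    ∃ C, ∀ t ≥ 0, φ t ≤ C := by
  obtain ⟨C₀, hC₀⟩ :=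
    isCompact_Icc.bddAbove_image (hφ.mono (Icc_subset_Ici_self : Icc 0 t₀ ⊆ Ici 0))
  refine ⟨max C₀ B, fun t ht => ?_⟩
  obtain ⟨t₁, ht₁, hmax⟩ := isCompact_Icc.exists_isMaxOn (nonempty_Icc.2 ht)
    (hφ.mono (Icc_subset_Ici_self : Icc 0 t ⊆ Ici 0))
  refine (hmax ⟨ht, le_rfl⟩).trans ?_
  rcases le_or_gt t₁ t₀ with h₁ | h₁
  · exact (hC₀ (mem_image_of_mem φ ⟨ht₁.1, h₁⟩)).trans (le_max_left _ _)
  · exact (h t₁ h₁ (hmax.on_subset (Icc_subset_Icc_right ht₁.2))).trans (le_max_right _ _)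

theorem exists_volume_inter_Ici_lt {U : Set ℝ} (hU : volume U ≠ ⊤) {ε : ℝ≥0∞} (hε : 0 < ε) :
    ∃ T ≥ 0, volume (U ∩ Ici T) < ε := by
  have : IsFiniteMeasure (volume.restrict U) := isFiniteMeasure_restrict.2 hU
  have hlim := tendsto_measure_iInter_atTop (μ := volume.restrict U)
    (fun T : ℝ => measurableSet_Ici.nullMeasurableSet) (fun _ _ h => Ici_subset_Ici.2 h)
    ⟨0, measure_ne_top _ _⟩
  rw [show ⋂ T : ℝ, Ici T = ∅ from eq_empty_of_forall_notMem fun t ht =>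
    (lt_add_one t).not_ge (mem_iInter.1 ht (t + 1)), measure_empty] at hlim
  obtain ⟨T, hT, hTε⟩ := ((hlim.eventually (gt_mem_nhds hε)).and (eventually_ge_atTop 0)).exists
  exact ⟨T, hTε, by rwa [Function.comp_apply, Measure.restrict_apply measurableSet_Ici,
    inter_comm] at hT⟩

theorem exists_mem_Icc_notMem_of_volume_lt {U : Set ℝ} {T δ t : ℝ}
    (hU : volume (U ∩ Ici T) < ENNReal.ofReal δ) (ht : T ≤ t - δ) :
    ∃ t₀ ∈ Icc (t - δ) t, t₀ ∉ U := by
  by_contra! h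
  have hsub : Icc (t - δ) t ⊆ U ∩ Ici T := fun v hv => ⟨h v hv, ht.trans hv.1⟩
  have := (measure_mono hsub).trans_lt hU
  rw [Real.volume_Icc, sub_sub_cancel] at this
  exact this.false

section DelayEquation

noncomputable def delayRHS (a b : ℝ) (K X : ℝ → ℝ) (u : ℝ) : ℝ :=
  a * X u + b * kernelConv K X u

variable {a b : ℝ} {K X : ℝ → ℝ} {γ D : ℝ}

theorem measurable_delayRHS (hKm : Measurable K) (hXm : Measurable X) :
    Measurable (delayRHS a b K X) :=
  (measurable_const.mul hXm).add (measurable_const.mul (measurable_kernelConv hKm hXm))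

theorem abs_delayRHS_le {u : ℝ} (hK : IntegrableOn (fun s => K s * rexp (-γ * s)) (Ioi 0))
    (hXb : ∀ v ≤ u, |X v| ≤ D * rexp (γ * v)) :
    |delayRHS a b K X u| ≤ (|a| + |b| * kernelNorm K γ) * D * rexp (γ * u) := by
  have hconv := abs_kernelConv_le hK hXb
  calc |delayRHS a b K X u| ≤ |a| * |X u| + |b| * |kernelConv K X u| := by
        rw [delayRHS, ← abs_mul, ← abs_mul]; exact abs_add_le _ _
    _ ≤ |a| * (D * rexp (γ * u)) + |b| * (D * kernelNorm K γ * rexp (γ * u)) := by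
        gcongr; exact hXb u le_rfl
    _ = _ := by ring

theorem intervalIntegrable_delayRHS {r s t : ℝ} (hKm : Measurable K) (hXm : Measurable X)
    (hK : IntegrableOn (fun s => K s * rexp (-γ * s)) (Ioi 0))
    (hXb : ∀ v ≤ t, |X v| ≤ D * rexp (γ * v)) (hr : r ≤ t) (hs : s ≤ t) :
    IntervalIntegrable (delayRHS a b K X) volume r s := by
  refine IntervalIntegrable.mono_fun'
    (g := fun u => (|a| + |b| * kernelNorm K γ) * D * rexp (γ * u))
    (((by fun_prop : Continuous fun u => rexp (γ * u)).const_mul _).intervalIntegrable _ _)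
    (measurable_delayRHS hKm hXm).aestronglyMeasurable ?_
  filter_upwards [self_mem_ae_restrict measurableSet_uIoc] with u hu
  exact abs_delayRHS_le hK fun v hv => hXb v (hv.trans (hu.2.trans (max_le hr hs)))

namespace IsFundamental

variable (hX : IsFundamental a b K X)
include hX

theorem eq_zero_of_neg {t : ℝ} (ht : t < 0) : X t = 0 := hX.1 t ht

theorem apply_zero : X 0 = 1 := hX.2.1

theorem continuousOn : ContinuousOn X (Ici 0) := hX.2.2.1

theorem eq_one_add_integral {t : ℝ} (ht : 0 ≤ t) :
    X t = 1 + ∫ u in (0 : ℝ)..t, delayRHS a b K X u := hX.2.2.2 t ht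

theorem measurable_s4 : Measurable X := by
  classical
  have : X = (Ici 0).piecewise X 0 := by
    ext t
    by_cases ht : 0 ≤ t
    · simp [ht]
    · simp [ht, hX.eq_zero_of_neg (not_le.1 ht)]
  rw [this]
  exact hX.continuousOn.measurable_piecewise continuousOn_const measurableSet_Ici

theorem continuousAt {t : ℝ} (ht : t ≠ 0) : ContinuousAt X t := by
  rcases ht.lt_or_gt with ht | ht
  · exact continuousAt_const.congr
      (eventuallyEq_of_mem (Iio_mem_nhds ht) fun u hu => (hX.eq_zero_of_neg hu).symm)
  · exact hX.continuousOn.continuousAt (Ici_mem_nhds ht)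

theorem sub_eq_integral {t₀ t₁ : ℝ} (hKm : Measurable K)
    (hK : IntegrableOn (fun s => K s * rexp (-γ * s)) (Ioi 0))
    (hXb : ∀ v ≤ t₁, |X v| ≤ D * rexp (γ * v)) (h₀ : 0 ≤ t₀) (h₀₁ : t₀ ≤ t₁) :
    X t₁ - X t₀ = ∫ u in t₀..t₁, delayRHS a b K X u := by
  rw [hX.eq_one_add_integral (h₀.trans h₀₁), hX.eq_one_add_integral h₀, add_sub_add_left_eq_sub]
  exact intervalIntegral.integral_interval_sub_left
    (intervalIntegrable_delayRHS hKm hX.measurable_s4 hK hXb (h₀.trans h₀₁) le_rfl)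
    (intervalIntegrable_delayRHS hKm hX.measurable_s4 hK hXb (h₀.trans h₀₁) h₀₁)

theorem abs_sub_le {t₀ t₁ δ : ℝ} (hKm : Measurable K)
    (hK : IntegrableOn (fun s => K s * rexp (-γ * s)) (Ioi 0))
    (hXb : ∀ v ≤ t₁, |X v| ≤ D * rexp (γ * v)) (h₀ : 0 ≤ t₀) (h₀₁ : t₀ ≤ t₁)
    (hδ : t₁ - t₀ ≤ δ) :
    |X t₁ - X t₀| ≤ (|a| + |b| * kernelNorm K γ) * D * δ * rexp (|γ| * δ) * rexp (γ * t₁) := by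
  set c := |a| + |b| * kernelNorm K γ
  have hc : 0 ≤ c := by have := kernelNorm_nonneg K γ; positivity
  have hD : 0 ≤ D := nonneg_of_mul_nonneg_left ((abs_nonneg _).trans (hXb t₁ le_rfl)) (exp_pos _)
  rw [hX.sub_eq_integral hKm hK hXb h₀ h₀₁, ← Real.norm_eq_abs]
  refine (intervalIntegral.norm_integral_le_of_norm_le_const
    (C := c * D * (rexp (|γ| * δ) * rexp (γ * t₁))) fun u hu => ?_).trans ?_
  · rw [uIoc_of_le h₀₁] at hu
    refine (abs_delayRHS_le hK fun v hv => hXb v (hv.trans hu.2)).trans ?_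
    rw [← Real.exp_add]
    gcongr
    nlinarith [abs_nonneg γ, le_abs_self γ, neg_abs_le γ, hu.1, hu.2]
  · rw [abs_of_nonneg (sub_nonneg.2 h₀₁)]
    calc c * D * (rexp (|γ| * δ) * rexp (γ * t₁)) * (t₁ - t₀)
        ≤ c * D * (rexp (|γ| * δ) * rexp (γ * t₁)) * δ := by gcongr
      _ = c * D * δ * rexp (|γ| * δ) * rexp (γ * t₁) := by ring

theorem running_max_le_two_mul_exp {α t₀ t₁ δ : ℝ} (hKm : Measurable K)
    (hK : IntegrableOn (fun s => K s * rexp (-γ * s)) (Ioi 0)) (hαγ : α ≤ γ)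
    (hXb : ∀ v ≤ t₁, |X v| ≤ D * rexp (γ * v)) (hXt₁ : D * rexp (γ * t₁) ≤ |X t₁|)
    (h₀ : 0 ≤ t₀) (ht₀ : t₀ ∈ Icc (t₁ - δ) t₁) (hXt₀ : |X t₀| ≤ rexp (α * t₀)) (hδ : δ ≤ 1)
    (hδc : (|a| + |b| * kernelNorm K γ) * δ * rexp |γ| ≤ 1 / 2) :
    D ≤ 2 * rexp |α| := by
  have hD : 0 ≤ D := nonneg_of_mul_nonneg_left ((abs_nonneg _).trans (hXb t₁ le_rfl)) (exp_pos _)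
  have hexp₀ : rexp (α * t₀) ≤ rexp |α| * rexp (γ * t₁) := by
    rw [← Real.exp_add]
    gcongr
    nlinarith [mul_le_mul_of_nonneg_right hαγ (h₀.trans ht₀.2), abs_nonneg α, le_abs_self α,
      neg_abs_le α, ht₀.1, ht₀.2]
  have hstep : |X t₁ - X t₀| ≤ D / 2 * rexp (γ * t₁) := by
    refine (hX.abs_sub_le (δ := δ) hKm hK hXb h₀ ht₀.2 (by linarith [ht₀.1])).trans ?_
    have : rexp (|γ| * δ) ≤ rexp |γ| := exp_le_exp.2 (mul_le_of_le_one_right (abs_nonneg γ) hδ)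
    have hc : 0 ≤ |a| + |b| * kernelNorm K γ := by have := kernelNorm_nonneg K γ; positivity
    have hδ0 : 0 ≤ δ := by linarith [ht₀.1, ht₀.2]
    gcongr ?_ * _
    nlinarith [mul_le_mul_of_nonneg_left this (mul_nonneg (mul_nonneg hc hD) hδ0)]
  have : D * rexp (γ * t₁) ≤ (rexp |α| + D / 2) * rexp (γ * t₁) := by
    calc D * rexp (γ * t₁) ≤ |X t₁| := hXt₁
      _ ≤ |X t₀| + |X t₁ - X t₀| := by simpa using abs_add_le (X t₀) (X t₁ - X t₀)
      _ ≤ (rexp |α| + D / 2) * rexp (γ * t₁) := by linarith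
  linarith [le_of_mul_le_mul_right this (exp_pos _)]

theorem exists_abs_le_of_volume_ne_top {α : ℝ} (hKm : Measurable K)
    (hK : IntegrableOn (fun s => K s * rexp (-γ * s)) (Ioi 0)) (hαγ : α ≤ γ)
    (hU : volume {t | 0 ≤ t ∧ rexp (α * t) ≤ |X t|} ≠ ⊤) :
    ∃ C, ∀ t, |X t| ≤ C * rexp (γ * t) := by
  set c := |a| + |b| * kernelNorm K γ
  have hc : 0 ≤ c := by have := kernelNorm_nonneg K γ; positivity
  -- on a window of length `δ` the delay equation moves `X` by at most half its running maximum
  set δ := 1 / (2 * (c + 1) * rexp |γ|)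
  have hδ : 0 < δ := by positivity
  have hδ1 : δ ≤ 1 := by
    rw [div_le_one (by positivity)]
    nlinarith [one_le_exp (abs_nonneg γ)]
  have hδc : c * δ * rexp |γ| ≤ 1 / 2 := by
    have hδe : δ * rexp |γ| = 1 / (2 * (c + 1)) := by simp only [δ]; field_simp
    rw [mul_assoc, hδe, mul_one_div, div_le_div_iff₀ (by positivity) two_pos]
    linarith
  obtain ⟨T, hT0, hT⟩ := exists_volume_inter_Ici_lt hU (ENNReal.ofReal_pos.2 hδ)
  obtain ⟨C, hC⟩ := ContinuousOn.exists_forall_le_of_isMaxOn_Icc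
    (φ := fun t => |X t| * rexp (-γ * t)) (t₀ := T + δ) (B := 2 * rexp |α|)
    (hX.continuousOn.abs.mul (by fun_prop : Continuous fun t => rexp (-γ * t)).continuousOn)
    fun t₁ ht₁ hmax => by
      have hXb : ∀ v ≤ t₁, |X v| ≤ |X t₁| * rexp (-γ * t₁) * rexp (γ * v) := fun v hv => by
        rcases lt_or_ge v 0 with hv0 | hv0
        · rw [hX.eq_zero_of_neg hv0, abs_zero]; positivity
        · exact le_mul_exp_of_mul_exp_neg_le (hmax ⟨hv0, hv⟩)
      obtain ⟨t₀, ht₀, ht₀U⟩ := exists_mem_Icc_notMem_of_volume_lt hT (by linarith)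
      have h₀ : 0 ≤ t₀ := by linarith [ht₀.1]
      refine hX.running_max_le_two_mul_exp hKm hK hαγ hXb (le_of_eq ?_) h₀ ht₀
        (not_le.1 fun h => ht₀U ⟨h₀, h⟩).le hδ1 hδc
      rw [mul_assoc, ← Real.exp_add, neg_mul, neg_add_cancel, exp_zero, mul_one]
  refine ⟨C, fun t => ?_⟩
  rcases lt_or_ge t 0 with ht | ht
  · have := hC 0 le_rfl
    simp only [hX.apply_zero, abs_one, mul_zero, exp_zero, mul_one] at this
    rw [hX.eq_zero_of_neg ht, abs_zero]
    positivity
  · exact le_mul_exp_of_mul_exp_neg_le (hC t ht)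

theorem hasDerivAt {C t : ℝ} (hKm : Measurable K)
    (hK : IntegrableOn (fun s => K s * rexp (-γ * s)) (Ioi 0))
    (hXb : ∀ t, |X t| ≤ C * rexp (γ * t)) (ht : 0 < t) :
    HasDerivAt X (delayRHS a b K X t) t := by
  have hcont : ContinuousAt (delayRHS a b K X) t :=
    (continuousAt_const.mul (hX.continuousAt ht.ne')).add
      (continuousAt_const.mul
        (continuousAt_kernelConv hKm hX.measurable_s4 hK (fun _ => hX.continuousAt) hXb))
  refine ((intervalIntegral.integral_hasDerivAt_right
    (intervalIntegrable_delayRHS hKm hX.measurable_s4 hK (fun v _ => hXb v) ht.le le_rfl)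
    (measurable_delayRHS hKm hX.measurable_s4).stronglyMeasurable.stronglyMeasurableAtFilter
    hcont).const_add 1).congr_of_eventuallyEq ?_
  filter_upwards [Ioi_mem_nhds ht] with u hu
  exact hX.eq_one_add_integral hu.le

theorem charFn_mul_laplace {z : ℂ} {C : ℝ} (hKm : Measurable K)
    (hK : IntegrableOn (fun s => K s * rexp (-γ * s)) (Ioi 0))
    (hXb : ∀ t, |X t| ≤ C * rexp (γ * t)) (hγ : γ < z.re) :
    charFn a b K z * laplace X z = 1 := by
  have hXm := hX.measurable_s4
  have hLX := integrableOn_laplace_of_abs_le hXm.aestronglyMeasurable (fun t _ => hXb t) hγ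
  have hLconv := integrableOn_laplace_of_abs_le
    (measurable_kernelConv hKm hXm).aestronglyMeasurable
    (fun t _ => abs_kernelConv_le hK fun v _ => hXb v) hγ
  have hsplit : laplace (delayRHS a b K X) z =
      a * laplace X z + b * laplace (kernelConv K X) z := by
    simp only [laplace, delayRHS, Complex.ofReal_add, Complex.ofReal_mul, mul_add,
      mul_left_comm _ (a : ℂ), mul_left_comm _ (b : ℂ)]
    rw [integral_add (hLX.const_mul _) (hLconv.const_mul _), integral_const_mul,
      integral_const_mul]
  have hderiv := laplace_deriv hγ (hX.continuousOn 0 (mem_Ici.2 le_rfl))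
    (fun t ht => hX.hasDerivAt hKm hK hXb ht)
    (measurable_delayRHS hKm hXm).aestronglyMeasurable (fun t _ => hXb t)
    (fun t _ => abs_delayRHS_le hK fun v _ => hXb v)
  rw [hsplit, laplace_kernelConv hKm hXm hK (fun _ => hX.eq_zero_of_neg) hXb hγ,
    hX.apply_zero, Complex.ofReal_one] at hderiv
  rw [charFn_eq]
  linear_combination -hderiv

end IsFundamental

end DelayEquation

theorem stmt4_general (a b μ : ℝ) (K : ℝ → ℝ)
    (hKmeas : Measurable K)
    (hρint : IntegrableOn (fun s => Real.exp (μ * s) * K s) (Set.Ioi 0))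
    (X : ℝ → ℝ) (hX : IsFundamental a b K X)
    (α₁ : ℝ)
    (hzero : ∃ zstar : ℂ, α₁ < zstar.re ∧ -μ < zstar.re ∧ charFn a b K zstar = 0) :
    ∃ αbar : ℝ, α₁ < αbar ∧ ∃ U : Set ℝ, U ⊆ Set.Ici 0 ∧ MeasurableSet U ∧
      volume U = ⊤ ∧ ∀ t ∈ U, Real.exp (αbar * t) ≤ |X t| := by
  obtain ⟨z, hz₁, hzμ, hz⟩ := hzero
  obtain ⟨α, hα, hαz⟩ := exists_between (max_lt hz₁ hzμ)
  obtain ⟨γ, hαγ, hγz⟩ := exists_between hαz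
  have hK := integrableOn_mul_exp_neg_of_le hρint ((le_max_right _ _).trans (hα.trans hαγ).le)
  refine ⟨α, (le_max_left _ _).trans_lt hα, {t | 0 ≤ t ∧ rexp (α * t) ≤ |X t|},
    fun t ht => ht.1, measurableSet_Ici.inter (measurableSet_le (by fun_prop) hX.measurable_s4.abs),
    ?_, fun t ht => ht.2⟩
  by_contra hU
  obtain ⟨C, hC⟩ := hX.exists_abs_le_of_volume_ne_top hKmeas hK hαγ.le hU
  simpa [hz] using hX.charFn_mul_laplace hKmeas hK hC hγz

theorem stmt4 (a b μ : ℝ) (K : ℝ → ℝ)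
    (hKmeas : Measurable K) (hKpos : ∀ s ≥ (0 : ℝ), 0 ≤ K s)
    (hKint : IntegrableOn K (Set.Ioi 0))
    (hKone : (∫ s in Set.Ioi (0 : ℝ), K s) = 1)
    (hμ : 0 < μ)
    (hρint : IntegrableOn (fun s => Real.exp (μ * s) * K s) (Set.Ioi 0))
    (X : ℝ → ℝ) (hX : IsFundamental a b K X)
    (α₁ : ℝ)
    (hzero : ∃ zstar : ℂ, α₁ < zstar.re ∧ -μ < zstar.re ∧ charFn a b K zstar = 0) :
    ∃ αbar : ℝ, α₁ < αbar ∧ ∃ U : Set ℝ, U ⊆ Set.Ici 0 ∧ MeasurableSet U ∧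
      volume U = ⊤ ∧ ∀ t ∈ U, Real.exp (αbar * t) ≤ |X t| :=
  stmt4_general a b μ K hKmeas hρint X hX α₁ hzero
end

section
/- If a < 0 and a < b < −a, then h(λ) ≠ 0 for every λ ∈ ℂ with Re λ ≥ 0; that is, all zeros of the characteristic function have negative real part. -/
/-! On the closed right half-plane the Laplace transform of the probability density `K` has
modulus at most `1`, so a zero `λ` of `h` satisfies `|λ - a| ≤ |b| < -a`, which forces
`Re λ < 0`. -/

open MeasureTheory Real Set

theorem norm_laplace_le_integral {K : ℝ → ℝ} (hKpos : ∀ s ∈ Ioi (0 : ℝ), 0 ≤ K s)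
    (hKint : IntegrableOn K (Ioi 0)) {z : ℂ} (hz : 0 ≤ z.re) :
    ‖∫ s in Ioi (0 : ℝ), Complex.exp (-z * s) * (K s : ℂ)‖ ≤ ∫ s in Ioi (0 : ℝ), K s := by
  refine norm_integral_le_of_norm_le hKint ?_
  filter_upwards [ae_restrict_mem measurableSet_Ioi] with s hs
  have hdecay : Real.exp (-z * s).re ≤ 1 := by
    rw [Real.exp_le_one_iff, neg_mul, Complex.neg_re, Complex.re_mul_ofReal, neg_nonpos]
    exact mul_nonneg hz (le_of_lt hs)
  rw [norm_mul, Complex.norm_exp, Complex.norm_real, Real.norm_of_nonneg (hKpos s hs)]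
  exact mul_le_of_le_one_left (hKpos s hs) hdecay

theorem Complex.re_le_of_norm_sub_ofReal_le {z : ℂ} {a r : ℝ} (h : ‖z - a‖ ≤ r) :
    z.re ≤ a + r := by
  have := (z - a).re_le_norm
  rw [Complex.sub_re, Complex.ofReal_re] at this
  linarith

theorem stmt6_general (a b : ℝ) (K : ℝ → ℝ)
    (hKpos : ∀ s ≥ (0 : ℝ), 0 ≤ K s)
    (hKint : IntegrableOn K (Set.Ioi 0))
    (hKone : (∫ s in Set.Ioi (0 : ℝ), K s) = 1)
    (hab : a < b) (hba : b < -a) :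
    ∀ z : ℂ, 0 ≤ z.re → charFn a b K z ≠ 0 := by
  intro z hz hzero
  set I := ∫ s in Ioi (0 : ℝ), Complex.exp (-z * s) * (K s : ℂ) with hI
  have hInorm : ‖I‖ ≤ 1 :=
    hKone ▸ norm_laplace_le_integral (fun s hs => hKpos s (le_of_lt hs)) hKint hz
  have hroot : z - a = b * I := by
    rw [charFn, ← hI] at hzero
    linear_combination hzero
  have hdist : ‖z - a‖ ≤ |b| := by
    rw [hroot, norm_mul, Complex.norm_real, Real.norm_eq_abs]
    exact mul_le_of_le_one_right (abs_nonneg b) hInorm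
  have hb : |b| < -a := abs_lt.mpr ⟨by linarith, hba⟩
  linarith [Complex.re_le_of_norm_sub_ofReal_le hdist]

theorem stmt6 (a b μ : ℝ) (K : ℝ → ℝ)
    (hKmeas : Measurable K) (hKpos : ∀ s ≥ (0 : ℝ), 0 ≤ K s)
    (hKint : IntegrableOn K (Set.Ioi 0))
    (hKone : (∫ s in Set.Ioi (0 : ℝ), K s) = 1)
    (hμ : 0 < μ)
    (hρint : IntegrableOn (fun s => Real.exp (μ * s) * K s) (Set.Ioi 0))
    (ha : a < 0) (hab : a < b) (hba : b < -a) :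
    ∀ z : ℂ, 0 ≤ z.re → charFn a b K z ≠ 0 :=
  stmt6_general a b K hKpos hKint hKone hab hba
end

section
/- Set m₁ := ∫₀^∞ t K(t) dt (which is finite and positive under the standing assumptions). If b ≤ a ≤ 0, (a,b) ≠ (0,0), and b·m₁ > −1, then h(λ) ≠ 0 for every λ ∈ ℂ with Re λ ≥ 0; that is, all zeros of the characteristic function have negative real part. -/
/-!
Suppose `h(z) = 0` with `Re z ≥ 0`. Taking imaginary parts, `Im z = b · Im L(z)` where
`L(z) = ∫₀^∞ e^{-zs} K(s) ds`; since `|Im e^{-zs}| ≤ e^{-s Re z} |sin (s Im z)| ≤ |Im z| s`,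
we get `|Im z| ≤ |b| m₁ |Im z|`, and `|b| m₁ < 1` forces `Im z = 0`. For real `z = x ≥ 0` the
equation reads `x + (-a) + (-b) L(x) = 0` with three nonnegative terms, so `x = a = 0` and
`b L(0) = b = 0`, contradicting `(a, b) ≠ (0, 0)`.
-/

open MeasureTheory Real Set

lemma integrableOn_mul_of_integrableOn_exp_mul {μ : ℝ} (hμ : 0 < μ) {K : ℝ → ℝ}
    (h : IntegrableOn (fun s => exp (μ * s) * K s) (Ioi 0)) :
    IntegrableOn (fun s => s * K s) (Ioi 0) := by
  have hbdd : ∀ s ∈ Ioi (0 : ℝ), ‖s * exp (-(μ * s))‖ ≤ 1 / μ := by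
    intro s (hs : 0 < s)
    rw [norm_of_nonneg (by positivity), exp_neg, le_div_iff₀ hμ]
    calc s * (exp (μ * s))⁻¹ * μ = μ * s / exp (μ * s) := by ring
      _ ≤ 1 := div_le_one_of_le₀ (by linarith [add_one_le_exp (μ * s)]) (exp_pos _).le
  refine IntegrableOn.congr_fun (h.bdd_mul
    (by fun_prop : Continuous fun s => s * exp (-(μ * s))).aestronglyMeasurable
    ((ae_restrict_mem measurableSet_Ioi).mono hbdd)) (fun s _ => ?_) measurableSet_Ioi
  rw [exp_neg]
  field_simp

lemma norm_cexp_neg_mul_le_one {z : ℂ} (hz : 0 ≤ z.re) {s : ℝ} (hs : 0 ≤ s) :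
    ‖Complex.exp (-z * s)‖ ≤ 1 := by
  rw [Complex.norm_exp, exp_le_one_iff]
  simpa using mul_nonneg hz hs

lemma abs_im_cexp_neg_mul_le {z : ℂ} (hz : 0 ≤ z.re) {s : ℝ} (hs : 0 ≤ s) :
    |(Complex.exp (-z * s)).im| ≤ |z.im| * s := by
  have hexp : exp (-z * s).re ≤ 1 := by
    simpa [Complex.norm_exp] using norm_cexp_neg_mul_le_one hz hs
  calc |(Complex.exp (-z * s)).im| = exp (-z * s).re * |sin (-z * s).im| := by
        rw [Complex.exp_im, abs_mul, abs_of_pos (exp_pos _)]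
    _ ≤ 1 * |(-z * s).im| := mul_le_mul hexp abs_sin_le_abs (abs_nonneg _) zero_le_one
    _ = |z.im| * s := by simp [abs_mul, abs_of_nonneg hs]

lemma integrableOn_cexp_neg_mul_mul {z : ℂ} (hz : 0 ≤ z.re) {K : ℝ → ℝ}
    (hK : IntegrableOn K (Ioi 0)) :
    IntegrableOn (fun s : ℝ => Complex.exp (-z * s) * K s) (Ioi 0) :=
  hK.ofReal.bdd_mul
    (by fun_prop : Continuous fun s : ℝ => Complex.exp (-z * s)).aestronglyMeasurable
    ((ae_restrict_mem measurableSet_Ioi).mono fun _ hs => norm_cexp_neg_mul_le_one hz hs.le)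

lemma abs_im_integral_cexp_neg_mul_mul_le {z : ℂ} (hz : 0 ≤ z.re) {K : ℝ → ℝ}
    (hKpos : ∀ s ∈ Ioi (0 : ℝ), 0 ≤ K s) (hK : IntegrableOn K (Ioi 0))
    (hsK : IntegrableOn (fun s => s * K s) (Ioi 0)) :
    |(∫ s in Ioi (0 : ℝ), Complex.exp (-z * s) * K s).im|
      ≤ |z.im| * ∫ s in Ioi (0 : ℝ), s * K s := by
  rw [← RCLike.im_to_complex, ← integral_im (integrableOn_cexp_neg_mul_mul hz hK),
    ← integral_const_mul]
  refine (norm_eq_abs _).symm.trans_le <| norm_integral_le_of_norm_le (hsK.const_mul _)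
    ((ae_restrict_mem measurableSet_Ioi).mono fun s (hs : 0 < s) => ?_)
  calc ‖RCLike.im (Complex.exp (-z * s) * K s)‖ = |(Complex.exp (-z * s)).im| * K s := by
        simp [abs_of_nonneg (hKpos s hs)]
    _ ≤ |z.im| * s * K s :=
        mul_le_mul_of_nonneg_right (abs_im_cexp_neg_mul_le hz hs.le) (hKpos s hs)
    _ = |z.im| * (s * K s) := mul_assoc _ _ _

lemma charFn_ofReal (a b : ℝ) (K : ℝ → ℝ) (x : ℝ) :
    charFn a b K x = ↑(x - a - b * ∫ s in Ioi (0 : ℝ), exp (-(x * s)) * K s) := by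
  simp only [charFn, Complex.ofReal_sub, Complex.ofReal_mul, ← integral_complex_ofReal]
  push_cast
  simp only [neg_mul]

lemma im_eq_zero_of_charFn_eq_zero {a b : ℝ} {K : ℝ → ℝ} {z : ℂ} (hb : b ≤ 0)
    (hbm : -1 < b * ∫ s in Ioi (0 : ℝ), s * K s) (hz : 0 ≤ z.re)
    (hKpos : ∀ s ∈ Ioi (0 : ℝ), 0 ≤ K s) (hK : IntegrableOn K (Ioi 0))
    (hsK : IntegrableOn (fun s => s * K s) (Ioi 0)) (h : charFn a b K z = 0) :
    z.im = 0 := by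
  have hbound := abs_im_integral_cexp_neg_mul_mul_le hz hKpos hK hsK
  set I := ∫ s in Ioi (0 : ℝ), Complex.exp (-z * s) * K s
  set m₁ := ∫ s in Ioi (0 : ℝ), s * K s
  have him : z.im = b * I.im := by
    have := congrArg Complex.im h
    simp only [charFn, Complex.sub_im, Complex.ofReal_im, Complex.mul_im, Complex.ofReal_re,
      Complex.zero_im] at this
    linarith
  by_contra hy
  have hy : 0 < |z.im| := abs_pos.mpr hy
  have : |z.im| ≤ -b * (|z.im| * m₁) :=
    calc |z.im| = -b * |I.im| := by rw [him, abs_mul, abs_of_nonpos hb]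
      _ ≤ -b * (|z.im| * m₁) := mul_le_mul_of_nonneg_left hbound (neg_nonneg.mpr hb)
  nlinarith

lemma charFn_ofReal_ne_zero {a b : ℝ} {K : ℝ → ℝ} (ha : a ≤ 0) (hb : b ≤ 0)
    (hne : ¬(a = 0 ∧ b = 0)) (hKpos : ∀ s ∈ Ioi (0 : ℝ), 0 ≤ K s)
    (hKone : ∫ s in Ioi (0 : ℝ), K s = 1) {x : ℝ} (hx : 0 ≤ x) :
    charFn a b K x ≠ 0 := by
  rw [charFn_ofReal, Complex.ofReal_ne_zero]
  intro h
  set J := ∫ s in Ioi (0 : ℝ), exp (-(x * s)) * K s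
  have hJ : 0 ≤ J :=
    setIntegral_nonneg measurableSet_Ioi fun s hs => mul_nonneg (exp_pos _).le (hKpos s hs)
  have hbJ : b * J ≤ 0 := mul_nonpos_of_nonpos_of_nonneg hb hJ
  have hx0 : x = 0 := by linarith
  have ha0 : a = 0 := by linarith
  have hJ1 : J = 1 := by simp [J, hx0, hKone]
  exact hne ⟨ha0, by nlinarith⟩

theorem stmt7_general (a b μ : ℝ) (K : ℝ → ℝ)
    (hKpos : ∀ s ≥ (0 : ℝ), 0 ≤ K s)
    (hKint : IntegrableOn K (Set.Ioi 0))
    (hKone : (∫ s in Set.Ioi (0 : ℝ), K s) = 1)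
    (hμ : 0 < μ)
    (hρint : IntegrableOn (fun s => Real.exp (μ * s) * K s) (Set.Ioi 0))
    (m₁ : ℝ) (hm₁ : m₁ = ∫ t in Set.Ioi (0 : ℝ), t * K t)
    (hba : b ≤ a) (ha : a ≤ 0) (hne : ¬(a = 0 ∧ b = 0)) (hbm : b * m₁ > -1) :
    ∀ z : ℂ, 0 ≤ z.re → charFn a b K z ≠ 0 := by
  intro z hz hzero
  have hb : b ≤ 0 := hba.trans ha
  have hKpos' : ∀ s ∈ Ioi (0 : ℝ), 0 ≤ K s := fun s hs => hKpos s (le_of_lt hs)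
  have hy : z.im = 0 := im_eq_zero_of_charFn_eq_zero hb (hm₁ ▸ hbm) hz hKpos' hKint
    (integrableOn_mul_of_integrableOn_exp_mul hμ hρint) hzero
  have hz_real : z = (z.re : ℂ) := Complex.ext rfl (by simp [hy])
  exact charFn_ofReal_ne_zero ha hb hne hKpos' hKone hz (hz_real ▸ hzero)

theorem stmt7 (a b μ : ℝ) (K : ℝ → ℝ)
    (hKmeas : Measurable K) (hKpos : ∀ s ≥ (0 : ℝ), 0 ≤ K s)
    (hKint : IntegrableOn K (Set.Ioi 0))
    (hKone : (∫ s in Set.Ioi (0 : ℝ), K s) = 1)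
    (hμ : 0 < μ)
    (hρint : IntegrableOn (fun s => Real.exp (μ * s) * K s) (Set.Ioi 0))
    (m₁ : ℝ) (hm₁ : m₁ = ∫ t in Set.Ioi (0 : ℝ), t * K t)
    (hba : b ≤ a) (ha : a ≤ 0) (hne : ¬(a = 0 ∧ b = 0)) (hbm : b * m₁ > -1) :
    ∀ z : ℂ, 0 ≤ z.re → charFn a b K z ≠ 0 :=
  stmt7_general a b μ K hKpos hKint hKone hμ hρint m₁ hm₁ hba ha hne hbm
end

section
/- Let α < 0 and β < 0 with α ≠ β, and let C₃ ≥ 0, K₃ ≥ 0, K₄ ≥ 0. Suppose Y, P : [0,∞) → ℝ are measurable with |Y(t)| ≤ C₃ e^{βt} and |P(t) − K₃| ≤ K₄ e^{αt} for all t ≥ 0. Set M(t) = ∫₀ᵗ Y(s) P(t−s) ds and M_∞ = K₃ ∫₀^∞ Y(s) ds. Then for all t ≥ 0, |M(t) − M_∞| ≤ C₃ ( K₃/|β| + 2K₄/|α−β| ) e^{t·max(α,β)}; in particular M(t) converges to M_∞ exponentially as t → +∞. -/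
/-!
Subtracting `K₃ ∫₀^∞ Y` splits `M(t) - M_∞` into the convolution of `Y` with `P - K₃`
over `[0, t]` and the tail `-K₃ ∫ₜ^∞ Y`. The tail is at most `C₃ K₃ e^{βt} / |β|`.
The convolution is dominated by
`C₃ K₄ ∫₀ᵗ e^{βs} e^{α(t-s)} ds = C₃ K₄ (e^{βt} - e^{αt}) / (β - α)`,
whose numerator is at most `2 e^{t max(α, β)}` in absolute value.
-/

open MeasureTheory Real Set

theorem exp_mul_le_exp_mul_of_le {γ δ t : ℝ} (ht : 0 ≤ t) (h : γ ≤ δ) :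
    exp (γ * t) ≤ exp (t * δ) :=
  exp_le_exp.2 (by rw [mul_comm]; exact mul_le_mul_of_nonneg_left h ht)

theorem intervalIntegral_exp_mul {c : ℝ} (hc : c ≠ 0) (a b : ℝ) :
    ∫ x in a..b, exp (c * x) = (exp (c * b) - exp (c * a)) / c := by
  rw [intervalIntegral.integral_comp_mul_left (fun x => exp x) hc, integral_exp, smul_eq_mul,
    inv_mul_eq_div]

theorem intervalIntegral_exp_mul_mul_exp_mul_sub {α β : ℝ} (hαβ : α ≠ β) (t : ℝ) :
    ∫ s in (0 : ℝ)..t, exp (β * s) * exp (α * (t - s)) =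
      (exp (β * t) - exp (α * t)) / (β - α) := by
  have hfactor : ∀ s, exp (β * s) * exp (α * (t - s)) = exp (α * t) * exp ((β - α) * s) := by
    intro s
    rw [← exp_add, ← exp_add]
    ring_nf
  simp_rw [hfactor]
  rw [intervalIntegral.integral_const_mul, intervalIntegral_exp_mul (sub_ne_zero.2 hαβ.symm),
    mul_zero, exp_zero, mul_div_assoc', mul_sub, mul_one, ← exp_add]
  ring_nf

theorem exp_mul_sub_exp_mul_div_sub_le {α β t : ℝ} (ht : 0 ≤ t) :
    (exp (β * t) - exp (α * t)) / (β - α) ≤ 2 * exp (t * max α β) / |α - β| :=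
  calc (exp (β * t) - exp (α * t)) / (β - α)
      ≤ |exp (β * t) - exp (α * t)| / |α - β| := by
        rw [abs_sub_comm α β, ← abs_div]
        exact le_abs_self _
    _ ≤ (exp (β * t) + exp (α * t)) / |α - β| := by
        gcongr
        exact (abs_sub _ _).trans_eq (by rw [abs_of_pos (exp_pos _), abs_of_pos (exp_pos _)])
    _ ≤ 2 * exp (t * max α β) / |α - β| := by
        gcongr
        linarith [exp_mul_le_exp_mul_of_le ht (le_max_right α β),
          exp_mul_le_exp_mul_of_le ht (le_max_left α β)]

section ExponentialTail

variable {f : ℝ → ℝ} {C c a : ℝ}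

theorem integrableOn_Ioi_of_abs_le_exp_mul (hc : c < 0)
    (hfm : AEStronglyMeasurable f (volume.restrict (Ioi a)))
    (hf : ∀ x > a, |f x| ≤ C * exp (c * x)) : IntegrableOn f (Ioi a) :=
  ((integrableOn_exp_mul_Ioi hc a).const_mul C).mono' hfm <| by
    filter_upwards [ae_restrict_mem measurableSet_Ioi] with x hx using hf x hx

theorem abs_setIntegral_Ioi_le_of_abs_le_exp_mul (hc : c < 0)
    (hf : ∀ x > a, |f x| ≤ C * exp (c * x)) :
    |∫ x in Ioi a, f x| ≤ C * exp (c * a) / |c| := by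
  have hbound :=
    norm_integral_le_of_norm_le (f := f) ((integrableOn_exp_mul_Ioi hc a).const_mul C) <| by
      filter_upwards [ae_restrict_mem measurableSet_Ioi] with x hx using hf x hx
  rw [abs_of_neg hc, mul_div_assoc, div_neg, ← neg_div]
  rwa [integral_const_mul, integral_exp_mul_Ioi hc, Real.norm_eq_abs] at hbound

end ExponentialTail

section Convolution

variable {f g : ℝ → ℝ} {α β C D t : ℝ}

theorem abs_mul_comp_sub_le_of_abs_le_exp_mul (hf : ∀ s ≥ 0, |f s| ≤ C * exp (β * s))
    (hg : ∀ s ≥ 0, |g s| ≤ D * exp (α * s)) {s : ℝ} (hs : s ∈ Icc 0 t) :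
    |f s * g (t - s)| ≤ C * D * (exp (β * s) * exp (α * (t - s))) := by
  have hfs := hf s hs.1
  rw [abs_mul, mul_mul_mul_comm]
  exact mul_le_mul hfs (hg (t - s) (sub_nonneg.2 hs.2)) (abs_nonneg _)
    ((abs_nonneg _).trans hfs)

theorem intervalIntegrable_mul_comp_sub_of_abs_le_exp_mul (ht : 0 ≤ t) (hfm : Measurable f)
    (hgm : Measurable g) (hf : ∀ s ≥ 0, |f s| ≤ C * exp (β * s))
    (hg : ∀ s ≥ 0, |g s| ≤ D * exp (α * s)) :
    IntervalIntegrable (fun s => f s * g (t - s)) volume 0 t := by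
  have hfgm : Measurable fun s => f s * g (t - s) :=
    hfm.mul (hgm.comp (measurable_const.sub measurable_id))
  refine IntervalIntegrable.mono_fun'
    (g := fun s => C * D * (exp (β * s) * exp (α * (t - s))))
    ((by fun_prop : Continuous _).intervalIntegrable 0 t) hfgm.aestronglyMeasurable ?_
  rw [uIoc_of_le ht]
  filter_upwards [ae_restrict_mem measurableSet_Ioc] with s hs
  exact abs_mul_comp_sub_le_of_abs_le_exp_mul hf hg (Ioc_subset_Icc_self hs)

theorem abs_intervalIntegral_mul_comp_sub_le (hαβ : α ≠ β) (ht : 0 ≤ t)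
    (hf : ∀ s ≥ 0, |f s| ≤ C * exp (β * s)) (hg : ∀ s ≥ 0, |g s| ≤ D * exp (α * s)) :
    |∫ s in (0 : ℝ)..t, f s * g (t - s)| ≤
      C * D * ((exp (β * t) - exp (α * t)) / (β - α)) := by
  have hbound := intervalIntegral.norm_integral_le_of_norm_le (μ := volume)
    (f := fun s => f s * g (t - s)) (g := fun s => C * D * (exp (β * s) * exp (α * (t - s))))
    ht (Filter.Eventually.of_forall fun s hs =>
      abs_mul_comp_sub_le_of_abs_le_exp_mul hf hg (Ioc_subset_Icc_self hs))
    ((by fun_prop : Continuous _).intervalIntegrable 0 t)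
  rwa [intervalIntegral.integral_const_mul, intervalIntegral_exp_mul_mul_exp_mul_sub hαβ]
    at hbound

end Convolution

theorem intervalIntegral_mul_sub_mul_setIntegral_Ioi {Y Q : ℝ → ℝ} {a t K : ℝ} (hat : a ≤ t)
    (hY : IntegrableOn Y (Ioi a))
    (hYQ : IntervalIntegrable (fun s => Y s * (Q s - K)) volume a t) :
    (∫ s in a..t, Y s * Q s) - K * ∫ s in Ioi a, Y s =
      (∫ s in a..t, Y s * (Q s - K)) - K * ∫ s in Ioi t, Y s := by
  have hYi : IntervalIntegrable Y volume a t :=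
    (intervalIntegrable_iff_integrableOn_Ioc_of_le hat).2 (hY.mono_set Ioc_subset_Ioi_self)
  have hsplit :
      ∫ s in a..t, Y s * Q s = (∫ s in a..t, Y s * (Q s - K)) + K * ∫ s in a..t, Y s := by
    rw [← intervalIntegral.integral_const_mul,
      ← intervalIntegral.integral_add hYQ (hYi.const_mul K)]
    congr 1
    ext s
    ring
  rw [hsplit, ← intervalIntegral.integral_Ioi_sub_Ioi hY hat]
  ring

theorem stmt17_general (α β C₃ K₃ K₄ : ℝ)
    (hβ : β < 0) (hαβ : α ≠ β)
    (hC₃ : 0 ≤ C₃) (hK₃ : 0 ≤ K₃) (hK₄ : 0 ≤ K₄)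
    (Y P : ℝ → ℝ) (hYm : Measurable Y) (hPm : Measurable P)
    (hY : ∀ t ≥ (0 : ℝ), |Y t| ≤ C₃ * Real.exp (β * t))
    (hP : ∀ t ≥ (0 : ℝ), |P t - K₃| ≤ K₄ * Real.exp (α * t)) :
    ∀ t ≥ (0 : ℝ),
      |(∫ s in (0 : ℝ)..t, Y s * P (t - s)) -
          K₃ * (∫ s in Set.Ioi (0 : ℝ), Y s)| ≤
        C₃ * (K₃ / |β| + 2 * K₄ / |α - β|) * Real.exp (t * max α β) := by
  intro t ht
  have hYint : IntegrableOn Y (Ioi 0) :=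
    integrableOn_Ioi_of_abs_le_exp_mul hβ hYm.aestronglyMeasurable fun s hs => hY s hs.le
  have hconv := abs_intervalIntegral_mul_comp_sub_le (g := fun s => P s - K₃) hαβ ht hY hP
  have htail := abs_setIntegral_Ioi_le_of_abs_le_exp_mul (a := t) hβ
    fun s hs => hY s (ht.trans hs.le)
  rw [intervalIntegral_mul_sub_mul_setIntegral_Ioi ht hYint
    (intervalIntegrable_mul_comp_sub_of_abs_le_exp_mul (g := fun s => P s - K₃) ht hYm
      (hPm.sub measurable_const) hY hP)]
  calc _ ≤ |∫ s in (0 : ℝ)..t, Y s * (P (t - s) - K₃)| + |K₃ * ∫ s in Ioi t, Y s| :=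
        abs_sub _ _
    _ ≤ C₃ * K₄ * (2 * exp (t * max α β) / |α - β|) +
          K₃ * (C₃ * exp (t * max α β) / |β|) := by
        rw [abs_mul, abs_of_nonneg hK₃]
        gcongr
        · exact hconv.trans (mul_le_mul_of_nonneg_left (exp_mul_sub_exp_mul_div_sub_le ht)
            (mul_nonneg hC₃ hK₄))
        · refine htail.trans ?_
          gcongr C₃ * ?_ / _
          exact exp_mul_le_exp_mul_of_le ht (le_max_right α β)
    _ = _ := by ring

theorem stmt17 (α β C₃ K₃ K₄ : ℝ)
    (hα : α < 0) (hβ : β < 0) (hαβ : α ≠ β)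
    (hC₃ : 0 ≤ C₃) (hK₃ : 0 ≤ K₃) (hK₄ : 0 ≤ K₄)
    (Y P : ℝ → ℝ) (hYm : Measurable Y) (hPm : Measurable P)
    (hY : ∀ t ≥ (0 : ℝ), |Y t| ≤ C₃ * Real.exp (β * t))
    (hP : ∀ t ≥ (0 : ℝ), |P t - K₃| ≤ K₄ * Real.exp (α * t)) :
    ∀ t ≥ (0 : ℝ),
      |(∫ s in (0 : ℝ)..t, Y s * P (t - s)) -
          K₃ * (∫ s in Set.Ioi (0 : ℝ), Y s)| ≤
        C₃ * (K₃ / |β| + 2 * K₄ / |α - β|) * Real.exp (t * max α β) :=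
  stmt17_general α β C₃ K₃ K₄ hβ hαβ hC₃ hK₃ hK₄ Y P hYm hPm hY hP
end

section
/- Let r > 0, a < 0 and σ₁, σ₂ ∈ ℝ. Define a₁ = 3(r−a) − σ₁², a₂ = 2r(r−a) − (2a+σ₁²)(3r−a) − 2rσ₁σ₂, and a₃ = −2ar(2(r−a) − σ₁²) − 2r²(σ₁+σ₂)². If a₁ > 0, a₃ > 0 and a₁a₂ − a₃ > 0, then every λ ∈ ℂ with λ ≠ a−r, λ ≠ −2r and λ − (2a+σ₁²) − 2rσ₁σ₂/(λ+r−a) − 2r²σ₂²/((λ+r−a)(λ+2r)) = 0 satisfies Re λ < 0. -/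
/-!
Clearing the denominators `(λ + r - a)(λ + 2r)` turns a zero of `H` into a root of the cubic
`λ³ + a₁λ² + a₂λ + a₃`. For a root `x + iy` of a real cubic with `x ≥ 0`, the imaginary part
forces `y = 0` or `y² = 3x² + 2a₁x + a₂`; in the first case `x` is a nonnegative real root, and
in the second substituting `y²` into the real part gives
`8x³ + 8a₁x² + 2(a₂ + a₁²)x + (a₁a₂ - a₃) = 0`. Under the Routh–Hurwitz conditions every
coefficient is positive in both cases, a contradiction.
-/

open Complex

theorem re_neg_of_cubic_eq_zero {a₁ a₂ a₃ : ℝ} (h₁ : 0 < a₁) (h₃ : 0 < a₃)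
    (h₁₂ : a₃ < a₁ * a₂) {z : ℂ} (hz : z ^ 3 + a₁ * z ^ 2 + a₂ * z + a₃ = 0) : z.re < 0 := by
  obtain ⟨x, y⟩ := z
  have hre : x ^ 3 - 3 * x * y ^ 2 + a₁ * (x ^ 2 - y ^ 2) + a₂ * x + a₃ = 0 := by
    have h := congrArg re hz
    simp only [pow_succ, pow_zero, one_mul, add_re, mul_re, mul_im, ofReal_re, ofReal_im,
      zero_re] at h
    linear_combination h
  have him : y * (3 * x ^ 2 - y ^ 2 + 2 * a₁ * x + a₂) = 0 := by
    have h := congrArg im hz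
    simp only [pow_succ, pow_zero, one_mul, add_im, mul_re, mul_im, ofReal_re, ofReal_im,
      zero_im] at h
    linear_combination h
  have h₂ : 0 < a₂ := pos_of_mul_pos_right (h₃.trans h₁₂) h₁.le
  by_contra! hx
  change 0 ≤ x at hx
  rcases mul_eq_zero.mp him with rfl | hy
  · nlinarith [pow_nonneg hx 3, pow_nonneg hx 2, mul_nonneg h₂.le hx]
  · have hx_root : 8 * x ^ 3 + 8 * a₁ * x ^ 2 + 2 * (a₂ + a₁ ^ 2) * x + (a₁ * a₂ - a₃) = 0 := by
      linear_combination (3 * x + a₁) * hy - hre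
    nlinarith [pow_nonneg hx 3, mul_nonneg h₁.le (pow_nonneg hx 2),
      mul_nonneg (add_pos h₂ (pow_pos h₁ 2)).le hx]

theorem cubic_eq_zero_of_char_eq_zero {r a σ₁ σ₂ : ℝ} {z : ℂ} (hd : z + r - a ≠ 0)
    (he : z + 2 * r ≠ 0)
    (h : z - ((2 * a + σ₁ ^ 2 : ℝ) : ℂ) -
          ((2 * r * σ₁ * σ₂ : ℝ) : ℂ) / (z + (r : ℂ) - (a : ℂ)) -
          ((2 * r ^ 2 * σ₂ ^ 2 : ℝ) : ℂ) /
            ((z + (r : ℂ) - (a : ℂ)) * (z + 2 * (r : ℂ))) = 0) :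
    z ^ 3 + ((3 * (r - a) - σ₁ ^ 2 : ℝ) : ℂ) * z ^ 2
      + ((2 * r * (r - a) - (2 * a + σ₁ ^ 2) * (3 * r - a) - 2 * r * σ₁ * σ₂ : ℝ) : ℂ) * z
      + ((-2 * a * r * (2 * (r - a) - σ₁ ^ 2) - 2 * r ^ 2 * (σ₁ + σ₂) ^ 2 : ℝ) : ℂ) = 0 := by
  have k₁ := div_mul_cancel₀ ((2 * r * σ₁ * σ₂ : ℝ) : ℂ) hd
  have k₂ := div_mul_cancel₀ ((2 * r ^ 2 * σ₂ ^ 2 : ℝ) : ℂ) (mul_ne_zero hd he)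
  push_cast at h k₁ k₂ ⊢
  linear_combination (z + r - a) * (z + 2 * r) * h + (z + 2 * r) * k₁ + k₂

theorem stmt18_general (r a σ₁ σ₂ : ℝ)
    (h1 : 0 < 3 * (r - a) - σ₁ ^ 2)
    (h3 : 0 < -2 * a * r * (2 * (r - a) - σ₁ ^ 2) - 2 * r ^ 2 * (σ₁ + σ₂) ^ 2)
    (h12 : (3 * (r - a) - σ₁ ^ 2) *
        (2 * r * (r - a) - (2 * a + σ₁ ^ 2) * (3 * r - a) - 2 * r * σ₁ * σ₂) -
        (-2 * a * r * (2 * (r - a) - σ₁ ^ 2) - 2 * r ^ 2 * (σ₁ + σ₂) ^ 2) > 0) :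
    ∀ z : ℂ, z ≠ (a : ℂ) - (r : ℂ) → z ≠ -2 * (r : ℂ) →
      z - ((2 * a + σ₁ ^ 2 : ℝ) : ℂ) -
          ((2 * r * σ₁ * σ₂ : ℝ) : ℂ) / (z + (r : ℂ) - (a : ℂ)) -
          ((2 * r ^ 2 * σ₂ ^ 2 : ℝ) : ℂ) /
            ((z + (r : ℂ) - (a : ℂ)) * (z + 2 * (r : ℂ))) = 0 →
      z.re < 0 := by
  intro z hz₁ hz₂ hchar
  have hd : z + r - a ≠ 0 := fun h ↦ hz₁ (by linear_combination h)
  have he : z + 2 * r ≠ 0 := fun h ↦ hz₂ (by linear_combination h)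
  exact re_neg_of_cubic_eq_zero h1 h3 (sub_pos.mp h12) (cubic_eq_zero_of_char_eq_zero hd he hchar)

theorem stmt18 (r a σ₁ σ₂ : ℝ) (hr : 0 < r) (ha : a < 0)
    (h1 : 0 < 3 * (r - a) - σ₁ ^ 2)
    (h3 : 0 < -2 * a * r * (2 * (r - a) - σ₁ ^ 2) - 2 * r ^ 2 * (σ₁ + σ₂) ^ 2)
    (h12 : (3 * (r - a) - σ₁ ^ 2) *
        (2 * r * (r - a) - (2 * a + σ₁ ^ 2) * (3 * r - a) - 2 * r * σ₁ * σ₂) -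
        (-2 * a * r * (2 * (r - a) - σ₁ ^ 2) - 2 * r ^ 2 * (σ₁ + σ₂) ^ 2) > 0) :
    ∀ z : ℂ, z ≠ (a : ℂ) - (r : ℂ) → z ≠ -2 * (r : ℂ) →
      z - ((2 * a + σ₁ ^ 2 : ℝ) : ℂ) -
          ((2 * r * σ₁ * σ₂ : ℝ) : ℂ) / (z + (r : ℂ) - (a : ℂ)) -
          ((2 * r ^ 2 * σ₂ ^ 2 : ℝ) : ℂ) /
            ((z + (r : ℂ) - (a : ℂ)) * (z + 2 * (r : ℂ))) = 0 →
      z.re < 0 :=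
  stmt18_general r a σ₁ σ₂ h1 h3 h12
end
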